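/- arXiv:math/0608563 — 7 statements merged into one kernel-verified Lean document; each statement's English description precedes it below -/
import Mathlib

section
/- Let u be a word (finite list) over an alphabet Σ, and let p and q be periods of u such that p + q ≤ |u|. Then gcd(p, q) is also a period of u. -/
/-- `p` is a period of the word `u`: `1 ≤ p ≤ |u| - 1` and `u[i] = u[i+p]`
for all valid indices `i`. -/
def IsPeriod {α : Type*} (u : List α) (p : ℕ) : Prop :=
  1 ≤ p ∧ p ≤ u.length - 1 ∧
    ∀ (i : ℕ) (h : i + p < u.length),
      u[i]'(Nat.lt_of_le_of_lt (Nat.le_add_right i p) h) = u[i + p]'h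

private lemma per_sub {α : Type*} (u : List α) {p q : ℕ} (hp1 : 1 ≤ p)
    (hlt : p < q) (hql : p + q ≤ u.length)
    (hp : ∀ i, i + p < u.length → u[i]? = u[i+p]?)
    (hq : ∀ i, i + q < u.length → u[i]? = u[i+q]?) :
    ∀ i, i + (q - p) < u.length → u[i]? = u[i + (q - p)]? := by
  intro i h
  by_cases hc : i + q < u.length
  · have h1 := hq i hc
    have h2 := hp (i + (q - p)) (by omega)
    rw [show i + (q - p) + p = i + q by omega] at h2
    rw [h1, h2]
  · have h1 := hp (i - p) (by omega)
    rw [show i - p + p = i by omega] at h1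
    have h2 := hq (i - p) (by omega)
    rw [show i - p + q = i + (q - p) by omega] at h2
    rw [← h1, h2]

private lemma per_aux {α : Type*} (u : List α) :
    ∀ n p q, p + q = n → 1 ≤ p → 1 ≤ q → p + q ≤ u.length →
    (∀ i, i + p < u.length → u[i]? = u[i+p]?) →
    (∀ i, i + q < u.length → u[i]? = u[i+q]?) →
    ∀ i, i + Nat.gcd p q < u.length → u[i]? = u[i + Nat.gcd p q]? := by
  intro n
  induction n using Nat.strong_induction_on with
  | _ n ih =>
    intro p q hn hp1 hq1 hlen hp hq
    rcases lt_trichotomy p q with hlt | heq | hgt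
    · have hsub := per_sub u hp1 hlt (by omega) hp hq
      have := ih q (by omega) p (q - p) (by omega) hp1 (by omega) (by omega) hp hsub
      rwa [Nat.gcd_sub_self_right (le_of_lt hlt)] at this
    · subst heq
      rw [Nat.gcd_self]
      exact hp
    · have hsub := per_sub u hq1 hgt (by omega) hq hp
      have := ih p (by omega) q (p - q) (by omega) hq1 (by omega) (by omega) hq hsub
      rw [Nat.gcd_sub_self_right (le_of_lt hgt), Nat.gcd_comm] at this
      exact this

/-- The (restricted) Periodicity Lemma: if `p` and `q` are periods of `u`
and `p + q ≤ |u|`, then `gcd(p, q)` is also a period of `u`. -/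
theorem periodicity_lemma {α : Type*} (u : List α) (p q : ℕ)
    (hp : IsPeriod u p) (hq : IsPeriod u q) (hpq : p + q ≤ u.length) :
    IsPeriod u (Nat.gcd p q) := by
  obtain ⟨hp1, hp2, hp3⟩ := hp
  obtain ⟨hq1, hq2, hq3⟩ := hq
  have hgp : Nat.gcd p q ≤ p := Nat.le_of_dvd (by omega) (Nat.gcd_dvd_left p q)
  refine ⟨Nat.gcd_pos_of_pos_left q hp1, by omega, ?_⟩
  have key := per_aux u (p + q) p q rfl hp1 hq1 hpq
    (fun i h => by rw [List.getElem?_eq_getElem (by omega), List.getElem?_eq_getElem h, hp3 i h])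
    (fun i h => by rw [List.getElem?_eq_getElem (by omega), List.getElem?_eq_getElem h, hq3 i h])
  intro i h
  have := key i h
  rw [List.getElem?_eq_getElem (by omega), List.getElem?_eq_getElem h] at this
  exact Option.some.inj this
end

section
/- Let u and v be words over an alphabet Σ and let i, j be natural numbers with 0 ≤ i < j < |u| and |u| ≤ i + |v|. Then the following are equivalent: (1) the suffix u[i:] is a prefix of v and the suffix u[j:] is a prefix of v; (2) the suffix u[i:] is a prefix of v and j − i is a period of the word u[i:]. -/
theorem isPeriod_iff_drop_prefix {α : Type*} {u : List α} {p : ℕ} :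
    IsPeriod u p ↔ 0 < p ∧ p < u.length ∧ u.drop p <+: u := by
  simp only [IsPeriod, List.prefix_iff_getElem, List.length_drop, List.getElem_drop]
  constructor
  · rintro ⟨hp, hpu, hper⟩
    refine ⟨hp, by omega, by omega, fun k hk => ?_⟩
    simpa only [Nat.add_comm] using (hper k (by omega)).symm
  · rintro ⟨hp, hpu, _, hper⟩
    refine ⟨hp, by omega, fun k hk => ?_⟩
    simpa only [Nat.add_comm] using (hper k (by omega)).symm

theorem List.IsPrefix.prefix_iff_prefix_of_length_le {α : Type*} {x y v : List α}
    (hx : x <+: v) (hyx : y.length ≤ x.length) : y <+: v ↔ y <+: x :=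
  ⟨fun hy => List.prefix_of_prefix_length_le hy hx hyx, fun hy => hy.trans hx⟩

theorem overlap_pair_iff_period_general {α : Type*} (u v : List α) (i j : ℕ)
    (hij : i < j) (hj : j < u.length) :
    (u.drop i <+: v ∧ u.drop j <+: v) ↔
      (u.drop i <+: v ∧ IsPeriod (u.drop i) (j - i)) := by
  have hdrop : u.drop j = (u.drop i).drop (j - i) := by
    rw [List.drop_drop, Nat.add_sub_cancel' hij.le]
  have hbounds : 0 < j - i ∧ j - i < (u.drop i).length := by
    rw [List.length_drop]
    omega
  rw [isPeriod_iff_drop_prefix, hdrop]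
  refine and_congr_right fun hi => ?_
  rw [hi.prefix_iff_prefix_of_length_le (List.drop_sublist _ _).length_le]
  simp only [hbounds, true_and]

/-- Two overlap assertions `(u, v, i)` and `(u, v, j)` with `i < j` are both
satisfied if and only if the first is satisfied and `j - i` is a period of `u[i:]`. -/
theorem overlap_pair_iff_period {α : Type*} (u v : List α) (i j : ℕ)
    (hij : i < j) (hj : j < u.length) (hov : u.length ≤ i + v.length) :
    (u.drop i <+: v ∧ u.drop j <+: v) ↔
      (u.drop i <+: v ∧ IsPeriod (u.drop i) (j - i)) :=
  overlap_pair_iff_period_general u v i j hij hj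
end

section
/- Let u and v be words over an alphabet Σ and let i, j, k be natural numbers with 0 ≤ i < j < k < |u|, with |u| ≤ i + |v|, and with (j − i) + (k − i) ≤ |u| − i. Then the following are equivalent: (1) each of the suffixes u[i:], u[j:], and u[k:] is a prefix of v; (2) the suffix u[i:] is a prefix of v and gcd(j − i, k − i) is a period of the word u[i:]. -/
/-- Raw period predicate using optional indexing (no dependent proofs). -/
def RawPeriod {α : Type*} (w : List α) (d : ℕ) : Prop :=
  ∀ t, t + d < w.length → w[t]? = w[t + d]?

lemma rawPeriod_get {α : Type*} {w : List α} {d : ℕ} (h : RawPeriod w d)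
    (t : ℕ) (ht : t + d < w.length) :
    w[t]'(Nat.lt_of_le_of_lt (Nat.le_add_right t d) ht) = w[t + d]'ht := by
  have := h t ht
  have ht' : t < w.length := by omega
  rw [List.getElem?_eq_getElem ht', List.getElem?_eq_getElem ht] at this
  exact Option.some.inj this

lemma rawPeriod_of {α : Type*} {w : List α} {d : ℕ}
    (h : ∀ (t : ℕ) (ht : t + d < w.length),
      w[t]'(Nat.lt_of_le_of_lt (Nat.le_add_right t d) ht) = w[t + d]'ht) :
    RawPeriod w d := by
  intro t ht
  have ht' : t < w.length := by omega
  rw [List.getElem?_eq_getElem ht', List.getElem?_eq_getElem ht, h t ht]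

lemma rawPeriod_sub {α : Type*} {w : List α} {p q : ℕ} (hpq : p < q)
    (hs : p + q ≤ w.length) (hp : RawPeriod w p) (hq : RawPeriod w q) :
    RawPeriod w (q - p) := by
  intro t ht
  rcases le_or_gt p t with h | h
  · have e1 : w[t - p]? = w[(t - p) + p]? := hp (t - p) (by omega)
    have e2 : w[t - p]? = w[(t - p) + q]? := hq (t - p) (by omega)
    rw [show (t - p) + p = t from by omega] at e1
    rw [show (t - p) + q = t + (q - p) from by omega] at e2
    rw [← e1, e2]
  · have e1 : w[t]? = w[t + q]? := hq t (by omega)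
    have e2 : w[t + (q - p)]? = w[(t + (q - p)) + p]? := hp _ (by omega)
    rw [show (t + (q - p)) + p = t + q from by omega] at e2
    rw [e1, ← e2]

lemma rawPeriod_gcd {α : Type*} (w : List α) :
    ∀ s p q, p + q ≤ s → 1 ≤ p → 1 ≤ q → p + q ≤ w.length →
      RawPeriod w p → RawPeriod w q → RawPeriod w (Nat.gcd p q) := by
  intro s
  induction s using Nat.strong_induction_on with
  | _ s ih =>
    intro p q hs hp1 hq1 hlen hp hq
    rcases lt_trichotomy p q with h | h | h
    · have hsub := rawPeriod_sub h hlen hp hq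
      rw [← Nat.gcd_sub_self_right (le_of_lt h)]
      exact ih q (by omega) p (q - p) (by omega) hp1 (by omega) (by omega) hp hsub
    · rw [h, Nat.gcd_self]; exact hq
    · have hsub := rawPeriod_sub h (by omega) hq hp
      rw [Nat.gcd_comm, ← Nat.gcd_sub_self_right (le_of_lt h)]
      exact ih p (by omega) q (p - q) (by omega) hq1 (by omega) (by omega) hq hsub

lemma rawPeriod_dvd {α : Type*} {w : List α} {d e : ℕ} (hd : RawPeriod w d)
    (hde : d ∣ e) : RawPeriod w e := by
  obtain ⟨m, rfl⟩ := hde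
  induction m with
  | zero => intro t ht; simp
  | succ m ih =>
    intro t ht
    have hdm : d * (m + 1) = d * m + d := by ring
    have h1 : w[t]? = w[t + d * m]? := ih t (by omega)
    have h2 : w[t + d * m]? = w[(t + d * m) + d]? := hd _ (by omega)
    rw [h1, h2, show (t + d * m) + d = t + d * (m + 1) from by omega]

lemma drop_prefix_iff {α : Type*} {w v : List α} (hw : w <+: v)
    (hv : w.length ≤ v.length) {d : ℕ} (hd : d ≤ w.length) :
    (w.drop d <+: v) ↔ RawPeriod w d := by
  constructor
  · intro h
    apply rawPeriod_of
    intro t ht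
    have ht1 : t < (w.drop d).length := by simp; omega
    have e1 : (w.drop d)[t]'ht1 = v[t]'(ht1.trans_le h.length_le) := h.getElem ht1
    have e2 : w[t]'(by omega) = v[t]'(ht1.trans_le h.length_le) :=
      hw.getElem (by omega)
    have e3 : (w.drop d)[t]'ht1 = w[d + t]'(by omega) := List.getElem_drop ..
    rw [e2, ← e1, e3]
    congr 1
    omega
  · intro h
    rw [List.prefix_iff_eq_take]
    apply List.ext_getElem
    · simp; omega
    · intro t h1 h2
      have ht1 : t < (w.drop d).length := h1
      have htw : t + d < w.length := by simp at ht1; omega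
      have e3 : (w.drop d)[t]'ht1 = w[d + t]'(by omega) := List.getElem_drop ..
      have e4 : (List.take ((w.drop d).length) v)[t]'h2 = v[t]'(by simp at h2 ⊢; omega) :=
        List.getElem_take ..
      have e2 : w[t]'(by omega) = v[t]'(by simp at h2 ⊢; omega) :=
        hw.getElem (by omega)
      rw [e3, e4, ← e2]
      have h5 := h t htw
      rw [show t + d = d + t from by omega] at h5
      rw [List.getElem?_eq_getElem (show t < w.length from by omega),
        List.getElem?_eq_getElem (show d + t < w.length from by omega)] at h5
      exact (Option.some.inj h5).symm

/-- Three overlap assertions `(u, v, i)`, `(u, v, j)`, `(u, v, k)` with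
`i < j < k < |u|` and `(j - i) + (k - i) ≤ |u| - i` are all satisfied if and
only if the first is satisfied and `gcd(j - i, k - i)` is a period of `u[i:]`. -/
theorem overlap_triple_iff_gcd_period {α : Type*} (u v : List α) (i j k : ℕ)
    (hij : i < j) (hjk : j < k) (hk : k < u.length) (hov : u.length ≤ i + v.length)
    (hsum : (j - i) + (k - i) ≤ u.length - i) :
    (u.drop i <+: v ∧ u.drop j <+: v ∧ u.drop k <+: v) ↔
      (u.drop i <+: v ∧ IsPeriod (u.drop i) (Nat.gcd (j - i) (k - i))) := by
  set w := u.drop i with hwdef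
  set p := j - i with hpdef
  set q := k - i with hqdef
  have hwl : w.length = u.length - i := by simp [hwdef]
  have hv : w.length ≤ v.length := by omega
  have hp1 : 1 ≤ p := by omega
  have hpq : p < q := by omega
  have hqn : q < w.length := by omega
  have hsum' : p + q ≤ w.length := by omega
  have hj' : u.drop j = w.drop p := by
    rw [hwdef, List.drop_drop]; congr 1; omega
  have hk' : u.drop k = w.drop q := by
    rw [hwdef, List.drop_drop]; congr 1; omega
  constructor
  · rintro ⟨h1, h2, h3⟩
    have hp : RawPeriod w p := (drop_prefix_iff h1 hv (by omega)).mp (hj' ▸ h2)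
    have hq : RawPeriod w q := (drop_prefix_iff h1 hv (by omega)).mp (hk' ▸ h3)
    have hg : RawPeriod w (Nat.gcd p q) :=
      rawPeriod_gcd w (p + q) p q le_rfl hp1 (by omega) hsum' hp hq
    refine ⟨h1, Nat.succ_le_of_lt (Nat.gcd_pos_of_pos_left q hp1), ?_, ?_⟩
    · have := Nat.gcd_le_left q hp1
      omega
    · exact fun t ht => rawPeriod_get hg t ht
  · rintro ⟨h1, hg1, hg2, hg3⟩
    have hg : RawPeriod w (Nat.gcd p q) := rawPeriod_of hg3
    have hp : RawPeriod w p := rawPeriod_dvd hg (Nat.gcd_dvd_left p q)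
    have hq : RawPeriod w q := rawPeriod_dvd hg (Nat.gcd_dvd_right p q)
    exact ⟨h1, hj' ▸ (drop_prefix_iff h1 hv (le_of_lt (by omega))).mpr hp,
      hk' ▸ (drop_prefix_iff h1 hv (le_of_lt hqn)).mpr hq⟩
end

section
/- Let L ≥ 1 be a natural number and let i_1 < i_2 < ⋯ < i_N be a strictly increasing sequence of natural numbers with i_N < L. Suppose that for every index j with 1 ≤ j ≤ N − 2 one has L − i_j < (i_{j+2} − i_j) + (i_{j+1} − i_j). Then N ≤ 2·log₂(L) + 1. -/
private lemma pland_pow_le_logb {m L : ℕ} (_hL : 1 ≤ L) (h : 2 ^ m ≤ L) :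
    (m : ℝ) ≤ Real.logb 2 (L : ℝ) := by
  have h2 : (2 : ℝ) ^ m ≤ (L : ℝ) := by exact_mod_cast h
  have := Real.logb_le_logb_of_le (b := 2) (by norm_num) (by positivity) h2
  rwa [Real.logb_pow, Real.logb_self_eq_one (by norm_num), mul_one] at this

/-- The counting bound from the proof of Plandowski's theorem: if
`i₀ < i₁ < ⋯ < i_{N-1} < L` is a strictly increasing sequence of naturals such
that `L - i_j < (i_{j+2} - i_j) + (i_{j+1} - i_j)` whenever all three indices are
defined, then `N ≤ 2 log₂ L + 1`. -/
theorem plandowski_counting_bound (L : ℕ) (hL : 1 ≤ L) (N : ℕ) (i : Fin N → ℕ)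
    (hmono : StrictMono i) (hlt : ∀ j : Fin N, i j < L)
    (hcond : ∀ (j : ℕ) (h : j + 2 < N),
      L - i ⟨j, by omega⟩ <
        (i ⟨j + 2, h⟩ - i ⟨j, by omega⟩) + (i ⟨j + 1, by omega⟩ - i ⟨j, by omega⟩)) :
    (N : ℝ) ≤ 2 * Real.logb 2 (L : ℝ) + 1 := by
  have hlogb0 : (0 : ℝ) ≤ Real.logb 2 (L : ℝ) := by
    apply Real.logb_nonneg (by norm_num)
    exact_mod_cast hL
  rcases Nat.eq_zero_or_pos N with rfl | hN
  · push_cast; linarith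
  -- halving step
  have h2 : ∀ (j : ℕ) (h : j + 2 < N),
      2 * (L - i ⟨j + 2, h⟩) ≤ L - i ⟨j, by omega⟩ := by
    intro j h
    have hc := hcond j h
    have m1 : i ⟨j, by omega⟩ < i ⟨j + 1, by omega⟩ := hmono (by simp [Fin.lt_def])
    have m2 : i ⟨j + 1, by omega⟩ < i ⟨j + 2, h⟩ := hmono (by simp [Fin.lt_def])
    have l2 : i ⟨j + 2, h⟩ < L := hlt _
    omega
  -- main chain
  have key : ∀ (m : ℕ) (h : 2 * m < N),
      2 ^ m * (L - i ⟨2 * m, h⟩) ≤ L - i ⟨0, hN⟩ := by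
    intro m
    induction m with
    | zero => intro h; simp
    | succ m ih =>
      intro h
      have hm : 2 * m < N := by omega
      have hm2 : 2 * m + 2 < N := by omega
      have step := h2 (2 * m) hm2
      have : (⟨2 * m + 2, hm2⟩ : Fin N) = ⟨2 * (m + 1), h⟩ :=
        Fin.mk_eq_mk.mpr (by omega)
      rw [this] at step
      calc 2 ^ (m + 1) * (L - i ⟨2 * (m + 1), h⟩)
          = 2 ^ m * (2 * (L - i ⟨2 * (m + 1), h⟩)) := by ring
        _ ≤ 2 ^ m * (L - i ⟨2 * m, hm⟩) := Nat.mul_le_mul_left _ step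
        _ ≤ L - i ⟨0, hN⟩ := ih hm
  have hd0 : L - i ⟨0, hN⟩ ≤ L := Nat.sub_le _ _
  rcases Nat.even_or_odd N with ⟨k, hk⟩ | ⟨k, hk⟩
  · -- N = 2k, k ≥ 1; write N = 2(k-1) + 2
    have hk1 : 1 ≤ k := by omega
    have hlast : 2 * (k - 1) < N := by omega
    have hlast1 : 2 * (k - 1) + 1 < N := by omega
    have mlast : i ⟨2 * (k - 1), hlast⟩ < i ⟨2 * (k - 1) + 1, hlast1⟩ :=
      hmono (by simp [Fin.lt_def])
    have llast : i ⟨2 * (k - 1) + 1, hlast1⟩ < L := hlt _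
    have hd2 : 2 ≤ L - i ⟨2 * (k - 1), hlast⟩ := by omega
    have := key (k - 1) hlast
    have hpow : 2 ^ k ≤ L := by
      calc 2 ^ k = 2 ^ (k - 1) * 2 := by
            rw [← pow_succ]; congr 1; omega
        _ ≤ 2 ^ (k - 1) * (L - i ⟨2 * (k - 1), hlast⟩) := Nat.mul_le_mul_left _ hd2
        _ ≤ L - i ⟨0, hN⟩ := this
        _ ≤ L := hd0
    have := pland_pow_le_logb hL hpow
    have hNk : N = 2 * k := by omega
    rw [hNk]; push_cast; linarith
  · -- N = 2k + 1
    have hlast : 2 * k < N := by omega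
    have hd1 : 1 ≤ L - i ⟨2 * k, hlast⟩ := by
      have := hlt ⟨2 * k, hlast⟩; omega
    have hpow : 2 ^ k ≤ L :=
      calc 2 ^ k = 2 ^ k * 1 := by ring
        _ ≤ 2 ^ k * (L - i ⟨2 * k, hlast⟩) := Nat.mul_le_mul_left _ hd1
        _ ≤ L - i ⟨0, hN⟩ := key k hlast
        _ ≤ L := hd0
    have := pland_pow_le_logb hL hpow
    rw [hk]; push_cast; linarith
end

section
/- Let α be a type and let u and v be freely reduced words over α × Bool. Let k be a natural number with k ≤ |u| and k ≤ |v| such that the length-k prefix of inv(u) equals the length-k prefix of v, and suppose k is maximal in the sense that either k = |u|, or k = |v|, or the letter of inv(u) in position k differs from the letter of v in position k. Then the word u[:|u|−k] ++ v[k:] is freely reduced, and FreeGroup.mk (u[:|u|−k] ++ v[k:]) = FreeGroup.mk u * FreeGroup.mk v in the free group on α. -/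
/-!
Write `u = u₁ ++ w` with `|w| = k`. The prefix hypothesis says `v = w⁻¹ ++ v₂`, so the product
is `u₁ ++ v₂` once `w w⁻¹` cancels. Being reduced is a condition on adjacent letters, and the only
new adjacency in `u₁ ++ v₂` is at the junction, where maximality of `k` rules out a cancelling
pair.
-/

/-- A word over `α × Bool` is freely reduced if it contains no adjacent pair
`(x, b) (x, !b)`. -/
def Reduced {α : Type*} (w : List (α × Bool)) : Prop :=
  ∀ (x : α) (b : Bool), ¬ ([(x, b), (x, !b)] <:+: w)

/-- The formal inverse of a word over `α × Bool`: the reverse of the word with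
every letter's Boolean component negated. -/
def invWord {α : Type*} (w : List (α × Bool)) : List (α × Bool) :=
  (w.map fun p => (p.1, !p.2)).reverse

open FreeGroup

theorem reduced_iff_isReduced {α : Type*} {w : List (α × Bool)} :
    Reduced w ↔ IsReduced w := by
  simp only [Reduced, isReduced_iff_not_step]
  constructor
  · rintro h _ (@⟨s, t, x, b⟩)
    exact h x b ⟨s, t, by simp⟩
  · rintro h x b ⟨s, t, rfl⟩
    exact h (s ++ t) (by simp)

theorem invWord_eq_invRev {α : Type*} (w : List (α × Bool)) : invWord w = invRev w := rfl

namespace FreeGroup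

variable {α : Type*}

theorem head?_invRev (w : List (α × Bool)) :
    (invRev w).head? = w.getLast?.map fun p => (p.1, !p.2) := by
  simp [invRev, List.head?_reverse, List.getLast?_map]

theorem IsReduced.append {u v : List (α × Bool)} (hu : IsReduced u) (hv : IsReduced v)
    (h : u = [] ∨ v = [] ∨ (invRev u).head? ≠ v.head?) : IsReduced (u ++ v) := by
  rcases h with rfl | rfl | h
  · simpa using hv
  · simpa using hu
  refine List.isChain_append.2 ⟨hu, hv, fun x hx y hy hxy => ?_⟩
  rw [head?_invRev, hx, hy] at h
  by_contra hne
  exact h (by simp [hxy, Bool.eq_not.2 hne])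

theorem mk_append_mul_mk_invRev_append (u w v : List (α × Bool)) :
    mk (u ++ w) * mk (invRev w ++ v) = mk (u ++ v) := by
  simp only [← mul_mk, ← inv_mk]
  group

end FreeGroup

/-- Correctness of Lohrey's cancellation step: if `u` and `v` are freely reduced
and `k` is the length of the maximal common prefix of `inv(u)` and `v`, then
`u[:|u|-k] ++ v[k:]` is freely reduced and represents the product of the elements
represented by `u` and `v` in the free group. -/
theorem lohrey_cancellation {α : Type*} (u v : List (α × Bool))
    (hu : Reduced u) (hv : Reduced v) (k : ℕ)
    (hku : k ≤ u.length) (hkv : k ≤ v.length)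
    (hpre : (invWord u).take k = v.take k)
    (hmax : k = u.length ∨ k = v.length ∨ (invWord u)[k]? ≠ v[k]?) :
    Reduced (u.take (u.length - k) ++ v.drop k) ∧
      FreeGroup.mk (u.take (u.length - k) ++ v.drop k) =
        FreeGroup.mk u * FreeGroup.mk v := by
  obtain ⟨u₁, w, rfl, hw⟩ : ∃ u₁ w, u = u₁ ++ w ∧ w.length = k :=
    ⟨_, _, (u.take_append_drop (u.length - k)).symm, by simp; omega⟩
  obtain ⟨v₁, v₂, rfl, hv₁⟩ : ∃ v₁ v₂, v = v₁ ++ v₂ ∧ v₁.length = k :=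
    ⟨_, _, (v.take_append_drop k).symm, by simp; omega⟩
  obtain rfl : invRev w = v₁ := by
    simpa [invWord_eq_invRev, hw, hv₁, List.take_left'] using hpre
  have hjunction : u₁ = [] ∨ v₂ = [] ∨ (invRev u₁).head? ≠ v₂.head? := by
    simpa [invWord_eq_invRev, hw, List.getElem?_append_right, List.head?_eq_getElem?] using hmax
  simp only [reduced_iff_isReduced] at hu hv ⊢
  have hu₁ : IsReduced u₁ := hu.infix (List.prefix_append _ _).isInfix
  have hv₂ : IsReduced v₂ := hv.infix (List.suffix_append _ _).isInfix
  have htake : (u₁ ++ w).take ((u₁ ++ w).length - k) = u₁ := by simp [hw]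
  have hdrop : (invRev w ++ v₂).drop k = v₂ := by simp [hw]
  rw [htake, hdrop]
  exact ⟨hu₁.append hv₂ hjunction, (mk_append_mul_mk_invRev_append u₁ w v₂).symm⟩
end

section
/- Let G be the group presented with five generators a, b, c, d, e and the single relator a b c d e a⁻¹ b⁻¹ c⁻¹ d⁻¹ e⁻¹. Then for every element g of G there exists a unique well-tempered word representing g. -/
/-- The relator `a b c d e a⁻¹ b⁻¹ c⁻¹ d⁻¹ e⁻¹` of the genus-two surface group,
where `a, b, c, d, e` are the generators `0, 1, 2, 3, 4`. -/
def surfaceRelator : FreeGroup (Fin 5) :=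
  FreeGroup.of 0 * FreeGroup.of 1 * FreeGroup.of 2 * FreeGroup.of 3 * FreeGroup.of 4 *
    (FreeGroup.of 0)⁻¹ * (FreeGroup.of 1)⁻¹ * (FreeGroup.of 2)⁻¹ *
    (FreeGroup.of 3)⁻¹ * (FreeGroup.of 4)⁻¹

/-- The genus-two surface group, presented by five generators and the single
relator `a b c d e a⁻¹ b⁻¹ c⁻¹ d⁻¹ e⁻¹`. -/
abbrev SurfaceGroup : Type :=
  PresentedGroup ({surfaceRelator} : Set (FreeGroup (Fin 5)))

/-- The element of the surface group represented by a word over the ten letters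
`a, b, c, d, e, a⁻¹, b⁻¹, c⁻¹, d⁻¹, e⁻¹`: a letter `(x, true)` is the generator
`x` and `(x, false)` is its inverse. -/
def represents (w : List (Fin 5 × Bool)) : SurfaceGroup :=
  QuotientGroup.mk (FreeGroup.mk w)

/-- The ten bad turns, words of length five over the letters,
with `a = 0, b = 1, c = 2, d = 3, e = 4` and `true` marking a generator,
`false` its inverse. -/
def badTurns : List (List (Fin 5 × Bool)) :=
  [ [(4, true), (3, true), (2, true), (1, true), (0, true)],
    [(1, false), (0, false), (4, true), (3, true), (2, true)],
    [(3, false), (2, false), (1, false), (0, false), (4, true)],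
    [(0, true), (4, false), (3, false), (2, false), (1, false)],
    [(2, true), (1, true), (0, true), (4, false), (3, false)],
    [(0, false), (1, false), (2, false), (3, false), (4, false)],
    [(2, false), (3, false), (4, false), (0, true), (1, true)],
    [(4, false), (0, true), (1, true), (2, true), (3, true)],
    [(1, true), (2, true), (3, true), (4, true), (0, false)],
    [(3, true), (4, true), (0, false), (1, false), (2, false)] ]

/-- A word is well-tempered if it is freely reduced and contains no bad turn as
a contiguous subword. -/
def WellTempered (w : List (Fin 5 × Bool)) : Prop :=
  Reduced w ∧ ∀ t ∈ badTurns, ¬ t <:+: w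

namespace WTaux

open List

abbrev L := Fin 5 × Bool

/-- The rewriting rules: free cancellations plus "bad turn ↦ its reversal". -/
def rules : List (List L × List L) :=
  ((List.finRange 5).flatMap fun x =>
    [([(x, true), (x, false)], ([] : List L)), ([(x, false), (x, true)], [])])
  ++ badTurns.map (fun t => (t, t.reverse))

/-- One rewriting step. -/
def Step (w w' : List L) : Prop :=
  ∃ r ∈ rules, ∃ u v, w = u ++ r.1 ++ v ∧ w' = u ++ r.2 ++ v

abbrev Star := Relation.ReflTransGen Step

/-- Pairs of letters contributing to the termination measure. -/
def muP : List (L × L) :=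
  [((0,false),(2,false)), ((0,false),(4,false)), ((0,true),(1,false)), ((0,true),(3,false)),
   ((1,false),(2,true)), ((1,false),(4,true)), ((1,true),(0,false)), ((1,true),(3,true)),
   ((2,false),(1,true)), ((2,false),(4,false)), ((2,true),(0,true)), ((2,true),(3,false)),
   ((3,false),(1,false)), ((3,false),(4,true)), ((3,true),(0,false)), ((3,true),(2,false)),
   ((4,false),(1,true)), ((4,false),(3,true)), ((4,true),(0,true)), ((4,true),(2,true))]

def mu (x y : L) : ℕ := if ((x, y) : L × L) ∈ muP then 1 else 0

def pairSum : List L → ℕ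
  | [] => 0
  | x :: w => (w.map (mu x)).sum + pairSum w

/-- The termination measure. -/
def M (w : List L) : ℕ := w.length + pairSum w

def tryRules (w : List L) : Option (List L) :=
  rules.findSome? fun r => if r.1.isPrefixOf w then some (r.2 ++ w.drop r.1.length) else none

def step1 : List L → Option (List L)
  | [] => none
  | x :: w =>
    match tryRules (x :: w) with
    | some w' => some w'
    | none => (step1 w).map (x :: ·)

def nfFuel : ℕ → List L → List L
  | 0, w => w
  | n+1, w =>
    match step1 w with
    | none => w
    | some w' => nfFuel n w'

/-- Normal form. -/
def nf (w : List L) : List L := nfFuel (M w) w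

/-! ### Finite checks -/

theorem ruleFacts : ∀ r ∈ rules, (r.2 = [] ∧ r.1.length = 2) ∨
    (r.1.reverse = r.2 ∧ pairSum r.2 < pairSum r.1) := by decide

theorem rules_lhs_len : ∀ r ∈ rules, 2 ≤ r.1.length ∧ r.1.length ≤ 5 := by decide

theorem cancel_mem : ∀ (x : Fin 5) (b : Bool),
    ([(x, b), (x, !b)], ([] : List L)) ∈ rules := by decide

theorem turn_mem : ∀ t ∈ badTurns, (t, t.reverse) ∈ rules := by decide

theorem ruleShape : ∀ r ∈ rules,
    (∃ x b, r = ([(x, b), (x, !b)], [])) ∨ (r.1 ∈ badTurns ∧ r.2 = r.1.reverse) := by decide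

set_option maxHeartbeats 4000000 in
theorem innerP : ∀ r1 ∈ rules, ∀ r2 ∈ rules, ∀ k < 6,
    k + r2.1.length ≤ r1.1.length → (r1.1.drop k).take r2.1.length = r2.1 →
    nf r1.2 = nf (r1.1.take k ++ r2.2 ++ r1.1.drop (k + r2.1.length)) := by decide

set_option maxHeartbeats 4000000 in
theorem overlapP : ∀ r1 ∈ rules, ∀ r2 ∈ rules, ∀ k < 6,
    k ≤ r1.1.length → r2.1.take (r1.1.length - k) = r1.1.drop k →
    nf (r1.2 ++ r2.1.drop (r1.1.length - k)) = nf (r1.1.take k ++ r2.2) := by decide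

/-! ### The measure decreases -/

def cross (u v : List L) : ℕ := (u.map (fun x => (v.map (mu x)).sum)).sum

theorem cross_cons (x : L) (u v : List L) :
    cross (x :: u) v = (v.map (mu x)).sum + cross u v := rfl

theorem cross_nil_left (v : List L) : cross [] v = 0 := rfl

theorem cross_nil_right (u : List L) : cross u [] = 0 := by
  induction u with
  | nil => rfl
  | cons x u ih => rw [cross_cons, ih]; rfl

theorem pairSum_cons (x : L) (w : List L) :
    pairSum (x :: w) = (w.map (mu x)).sum + pairSum w := rfl

theorem pairSum_append (u v : List L) :
    pairSum (u ++ v) = pairSum u + cross u v + pairSum v := by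
  induction u with
  | nil => rw [List.nil_append, cross_nil_left, show pairSum ([] : List L) = 0 from rfl]; omega
  | cons x u ih =>
    rw [cons_append, pairSum_cons, pairSum_cons, cross_cons, ih, map_append, sum_append]
    omega

theorem cross_append_right (u p v : List L) :
    cross u (p ++ v) = cross u p + cross u v := by
  induction u with
  | nil => rfl
  | cons x u ih =>
    rw [cross_cons, cross_cons, cross_cons, ih, map_append, sum_append]
    omega

theorem sum_map_perm {p q : List L} (h : p.Perm q) (f : L → ℕ) :
    (p.map f).sum = (q.map f).sum := (h.map f).sum_eq

theorem cross_perm_right {p q : List L} (h : p.Perm q) (u : List L) :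
    cross u p = cross u q := by
  unfold cross
  congr 1
  exact List.map_congr_left fun x _ => sum_map_perm h (mu x)

theorem cross_perm_left {p q : List L} (h : p.Perm q) (v : List L) :
    cross p v = cross q v := sum_map_perm h _

theorem M_append (u p v : List L) :
    M (u ++ p ++ v) = u.length + p.length + v.length
      + pairSum u + cross u p + cross u v + pairSum p + cross p v + pairSum v := by
  rw [append_assoc]
  unfold M
  rw [pairSum_append, pairSum_append, cross_append_right, length_append, length_append]
  omega

theorem M_step {w w' : List L} (h : Step w w') : M w' < M w := by
  obtain ⟨r, hr, u, v, rfl, rfl⟩ := h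
  rcases ruleFacts r hr with ⟨h2, hlen⟩ | ⟨hrev, hps⟩
  · rw [h2, M_append, M_append, cross_nil_right, cross_nil_left]
    rw [show pairSum [] = 0 from rfl, List.length_nil]
    omega
  · have hperm : r.1.Perm r.2 := (hrev ▸ (List.reverse_perm r.1)).symm
    rw [M_append, M_append, cross_perm_right hperm u, cross_perm_left hperm v,
      hperm.length_eq]
    omega

/-! ### `step1` and `nf` basics -/

theorem tryRules_some {w w' : List L} (h : tryRules w = some w') : Step w w' := by
  obtain ⟨r, hr, hf⟩ := List.exists_of_findSome?_eq_some h
  by_cases hp : r.1.isPrefixOf w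
  · simp only [hp, if_true, Option.some.injEq] at hf
    have hpre : r.1 <+: w := List.isPrefixOf_iff_prefix.mp hp
    have hw : r.1 ++ w.drop r.1.length = w := List.prefix_iff_eq_append.mp hpre
    refine ⟨r, hr, [], w.drop r.1.length, ?_, ?_⟩
    · rw [List.nil_append]; exact hw.symm
    · rw [List.nil_append]; exact hf.symm
  · simp [hp] at hf

theorem step_cons {w w' : List L} (x : L) (h : Step w w') : Step (x :: w) (x :: w') := by
  obtain ⟨r, hr, u, v, rfl, rfl⟩ := h
  exact ⟨r, hr, x :: u, v, by simp, by simp⟩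

theorem step1_some : ∀ {w w' : List L}, step1 w = some w' → Step w w' := by
  intro w
  induction w with
  | nil => intro w' h; simp [step1] at h
  | cons x w ih =>
    intro w' h
    rw [step1] at h
    rcases htr : tryRules (x :: w) with _ | w₁
    · rw [htr] at h
      simp only [Option.map_eq_some_iff] at h
      obtain ⟨w₁, hw₁, rfl⟩ := h
      exact step_cons x (ih hw₁)
    · rw [htr] at h
      simp only [Option.some.injEq] at h
      exact h ▸ tryRules_some htr

theorem star_nfFuel : ∀ (n : ℕ) (w : List L), Star w (nfFuel n w) := by
  intro n
  induction n with
  | zero => intro w; exact Relation.ReflTransGen.refl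
  | succ n ih =>
    intro w
    rw [nfFuel]
    rcases h : step1 w with _ | w'
    · exact Relation.ReflTransGen.refl
    · exact Relation.ReflTransGen.head (step1_some h) (ih w')

theorem star_nf (w : List L) : Star w (nf w) := star_nfFuel _ w

theorem step1_none_no_factor : ∀ {w : List L}, step1 w = none →
    ∀ r ∈ rules, ¬ r.1 <:+: w := by
  intro w
  induction w with
  | nil =>
    intro _ r hr hinf
    have h1 := hinf.length_le
    rw [List.length_nil] at h1
    have h2 := (rules_lhs_len r hr).1
    omega
  | cons x w ih =>
    intro h r hr hinf
    rw [step1] at h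
    rcases htr : tryRules (x :: w) with _ | w₁
    · rw [htr] at h
      simp only [Option.map_eq_none_iff] at h
      rcases List.infix_cons_iff.mp hinf with hpre | hinf'
      · have hnone := List.findSome?_eq_none_iff.mp htr r hr
        rw [if_pos (List.isPrefixOf_iff_prefix.mpr hpre)] at hnone
        cases hnone
      · exact ih h r hr hinf'
    · rw [htr] at h; simp at h

theorem step_factor {w w' : List L} (h : Step w w') : ∃ r ∈ rules, r.1 <:+: w := by
  obtain ⟨r, hr, u, v, rfl, _⟩ := h
  exact ⟨r, hr, u, v, rfl⟩

theorem wt_iff {w : List L} : WellTempered w ↔ ∀ r ∈ rules, ¬ r.1 <:+: w := by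
  constructor
  · rintro ⟨hred, hbad⟩ r hr hinf
    rcases ruleShape r hr with ⟨x, b, rfl⟩ | ⟨ht, _⟩
    · exact hred x b hinf
    · exact hbad r.1 ht hinf
  · intro h
    refine ⟨fun x b hinf => h _ (cancel_mem x b) hinf, fun t ht hinf => h _ (turn_mem t ht) ?_⟩
    exact hinf

theorem step1_none_wt {w : List L} (h : step1 w = none) : WellTempered w :=
  wt_iff.mpr (step1_none_no_factor h)

theorem wt_step1_none {w : List L} (h : WellTempered w) : step1 w = none := by
  rcases hs : step1 w with _ | w'
  · rfl
  · obtain ⟨r, hr, hinf⟩ := step_factor (step1_some hs)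
    exact absurd hinf (wt_iff.mp h r hr)

theorem wt_no_step {w w' : List L} (h : WellTempered w) : ¬ Step w w' := by
  intro hs
  obtain ⟨r, hr, hinf⟩ := step_factor hs
  exact wt_iff.mp h r hr hinf

theorem nfFuel_of_none {w : List L} (h : step1 w = none) : ∀ n, nfFuel n w = w := by
  intro n
  cases n with
  | zero => rfl
  | succ n => rw [nfFuel, h]

theorem nf_of_wt {w : List L} (h : WellTempered w) : nf w = w :=
  nfFuel_of_none (wt_step1_none h) _

theorem nfFuel_wt : ∀ (n : ℕ) (w : List L), M w ≤ n → WellTempered (nfFuel n w) := by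
  intro n
  induction n with
  | zero =>
    intro w hw
    have : w.length = 0 := by unfold M at hw; omega
    rw [List.length_eq_zero_iff] at this
    subst this
    exact step1_none_wt rfl
  | succ n ih =>
    intro w hw
    rw [nfFuel]
    rcases h : step1 w with _ | w'
    · exact step1_none_wt h
    · have := M_step (step1_some h)
      exact ih w' (by omega)

theorem nf_wt (w : List L) : WellTempered (nf w) := nfFuel_wt _ _ le_rfl

/-! ### Confluence -/

theorem step_context {p q : List L} (h : Step p q) (a b : List L) :
    Step (a ++ p ++ b) (a ++ q ++ b) := by
  obtain ⟨r, hr, u, v, rfl, rfl⟩ := h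
  exact ⟨r, hr, a ++ u, v ++ b, by simp [append_assoc], by simp [append_assoc]⟩

theorem star_context {p q : List L} (h : Star p q) (a b : List L) :
    Star (a ++ p ++ b) (a ++ q ++ b) := by
  induction h with
  | refl => exact Relation.ReflTransGen.refl
  | tail _ hstep ih => exact Relation.ReflTransGen.tail ih (step_context hstep a b)

theorem inner_nf : ∀ r1 ∈ rules, ∀ r2 ∈ rules, ∀ m s : List L,
    r1.1 = m ++ r2.1 ++ s → nf r1.2 = nf (m ++ r2.2 ++ s) := by
  intro r1 hr1 r2 hr2 m s h
  have hlen : r1.1.length = m.length + r2.1.length + s.length := by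
    rw [h, length_append, length_append]
  have h5 := (rules_lhs_len r1 hr1).2
  have hk : m.length < 6 := by omega
  have h1 : r1.1.take m.length = m := by rw [h, append_assoc]; exact List.take_left
  have h2 : r1.1.drop m.length = r2.1 ++ s := by rw [h, append_assoc]; exact List.drop_left
  have h3 : (r1.1.drop m.length).take r2.1.length = r2.1 := by
    rw [h2]; exact List.take_left
  have h4 : r1.1.drop (m.length + r2.1.length) = s := by
    have : r1.1 = (m ++ r2.1) ++ s := by rw [h]
    rw [this]
    have := List.drop_left (l₁ := m ++ r2.1) (l₂ := s)
    simpa using this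
  have := innerP r1 hr1 r2 hr2 m.length hk (by omega) h3
  rw [h1, h4] at this
  exact this

theorem overlap_nf : ∀ r1 ∈ rules, ∀ r2 ∈ rules, ∀ m o s : List L,
    r1.1 = m ++ o → r2.1 = o ++ s → nf (r1.2 ++ s) = nf (m ++ r2.2) := by
  intro r1 hr1 r2 hr2 m o s h1 h2
  have hlen : r1.1.length = m.length + o.length := by simp [h1]
  have h5 := (rules_lhs_len r1 hr1).2
  have hk : m.length < 6 := by omega
  have ho : r1.1.length - m.length = o.length := by omega
  have ht : r2.1.take (r1.1.length - m.length) = r1.1.drop m.length := by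
    rw [ho, h1, h2, List.drop_left]
    exact List.take_left
  have hd : r2.1.drop (r1.1.length - m.length) = s := by rw [ho, h2]; exact List.drop_left
  have htk : r1.1.take m.length = m := by rw [h1]; exact List.take_left
  have := overlapP r1 hr1 r2 hr2 m.length hk (by omega) ht
  rw [hd, htk] at this
  exact this

theorem locConf_aux {a₁ a₂ b₁ b₂ : List L} {r₁ r₂ : List L × List L}
    (hr₁ : r₁ ∈ rules) (hr₂ : r₂ ∈ rules) (m : List L)
    (hm : a₂ = a₁ ++ m) (h2 : r₁.1 ++ b₁ = m ++ (r₂.1 ++ b₂)) :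
    ∃ z, Star (a₁ ++ r₁.2 ++ b₁) z ∧ Star (a₂ ++ r₂.2 ++ b₂) z := by
  rcases List.append_eq_append_iff.mp h2 with ⟨s, hms, hb⟩ | ⟨o, hp1, hob⟩
  · -- disjoint: m = r₁.1 ++ s, b₁ = s ++ (r₂.1 ++ b₂)
    refine ⟨a₁ ++ r₁.2 ++ (s ++ (r₂.2 ++ b₂)), Relation.ReflTransGen.single ?_,
      Relation.ReflTransGen.single ?_⟩
    · refine ⟨r₂, hr₂, a₁ ++ r₁.2 ++ s, b₂, ?_, ?_⟩ <;> simp [hb, append_assoc]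
    · refine ⟨r₁, hr₁, a₁, s ++ (r₂.2 ++ b₂), ?_, ?_⟩ <;>
        simp [hm, hms, append_assoc]
  · -- r₁.1 = m ++ o, r₂.1 ++ b₂ = o ++ b₁
    rcases List.append_eq_append_iff.mp hob with ⟨s, hos, hb2⟩ | ⟨s, hp2, hb1⟩
    · -- inner: o = r₂.1 ++ s, b₂ = s ++ b₁, r₁.1 = m ++ r₂.1 ++ s
      have hin : r₁.1 = m ++ r₂.1 ++ s := by rw [hp1, hos, append_assoc]
      have hnf := inner_nf r₁ hr₁ r₂ hr₂ m s hin
      refine ⟨a₁ ++ nf r₁.2 ++ b₁, star_context (star_nf r₁.2) a₁ b₁, ?_⟩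
      have : a₂ ++ r₂.2 ++ b₂ = a₁ ++ (m ++ r₂.2 ++ s) ++ b₁ := by
        simp [hm, hb2, append_assoc]
      rw [this, hnf]
      exact star_context (star_nf _) a₁ b₁
    · -- overlap: r₂.1 = o ++ s, b₁ = s ++ b₂
      have hnf := overlap_nf r₁ hr₁ r₂ hr₂ m o s hp1 hp2
      refine ⟨a₁ ++ nf (r₁.2 ++ s) ++ b₂, ?_, ?_⟩
      · have : a₁ ++ r₁.2 ++ b₁ = a₁ ++ (r₁.2 ++ s) ++ b₂ := by simp [hb1, append_assoc]
        rw [this]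
        exact star_context (star_nf _) a₁ b₂
      · have : a₂ ++ r₂.2 ++ b₂ = a₁ ++ (m ++ r₂.2) ++ b₂ := by simp [hm, append_assoc]
        rw [this, hnf]
        exact star_context (star_nf _) a₁ b₂

theorem locConf {w u v : List L} (hu : Step w u) (hv : Step w v) :
    ∃ z, Star u z ∧ Star v z := by
  obtain ⟨r₁, hr₁, a₁, b₁, h₁, rfl⟩ := hu
  obtain ⟨r₂, hr₂, a₂, b₂, h₂, rfl⟩ := hv
  have hw : a₁ ++ (r₁.1 ++ b₁) = a₂ ++ (r₂.1 ++ b₂) := by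
    rw [← append_assoc, ← append_assoc, ← h₁, ← h₂]
  rcases List.append_eq_append_iff.mp hw with ⟨m, hm, hmm⟩ | ⟨m, hm, hmm⟩
  · exact locConf_aux hr₁ hr₂ m hm hmm
  · obtain ⟨z, hz₁, hz₂⟩ := locConf_aux hr₂ hr₁ m hm hmm
    exact ⟨z, hz₂, hz₁⟩

theorem newman : ∀ (n : ℕ) (w u v : List L), M w ≤ n → Star w u → Star w v →
    ∃ z, Star u z ∧ Star v z := by
  intro n
  induction n with
  | zero =>
    intro w u v _ hu hv
    rcases Relation.ReflTransGen.cases_head hu with rfl | ⟨w₁, hs, _⟩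
    · exact ⟨v, hv, Relation.ReflTransGen.refl⟩
    · exact absurd (M_step hs) (by omega)
  | succ n ih =>
    intro w u v hn hu hv
    rcases Relation.ReflTransGen.cases_head hu with rfl | ⟨w₁, hs₁, hu'⟩
    · exact ⟨v, hv, Relation.ReflTransGen.refl⟩
    rcases Relation.ReflTransGen.cases_head hv with rfl | ⟨w₂, hs₂, hv'⟩
    · exact ⟨u, Relation.ReflTransGen.refl, hu⟩
    obtain ⟨z₀, hz₁, hz₂⟩ := locConf hs₁ hs₂
    have hm₁ : M w₁ ≤ n := by have := M_step hs₁; omega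
    have hm₂ : M w₂ ≤ n := by have := M_step hs₂; omega
    obtain ⟨z₁, hu₁, hz₀₁⟩ := ih w₁ u z₀ hm₁ hu' hz₁
    obtain ⟨z₂, hz₁₂, hv₂⟩ := ih w₂ z₁ v hm₂ (hz₂.trans hz₀₁) hv'
    exact ⟨z₂, hu₁.trans hz₁₂, hv₂⟩

theorem star_eq_of_wt {u z : List L} (h : WellTempered u) (hs : Star u z) : z = u := by
  rcases Relation.ReflTransGen.cases_head hs with rfl | ⟨w₁, hstep, _⟩
  · rfl
  · exact absurd hstep (wt_no_step h)

theorem star_nf_eq {w v : List L} (h : Star w v) : nf w = nf v := by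
  obtain ⟨z, h₁, h₂⟩ := newman (M w) w (nf w) (nf v) le_rfl (star_nf w)
    (h.trans (star_nf v))
  rw [← star_eq_of_wt (nf_wt w) h₁, ← star_eq_of_wt (nf_wt v) h₂]

theorem nf_append_left (u v : List L) : nf (u ++ v) = nf (nf u ++ v) := by
  have := star_context (star_nf u) [] v
  simp only [nil_append] at this
  exact star_nf_eq this

theorem nf_append_right (u v : List L) : nf (u ++ v) = nf (u ++ nf v) := by
  have := star_context (star_nf v) u []
  simp only [append_nil] at this
  exact star_nf_eq this

/-! ### The group of well-tempered words -/

def linv (x : L) : L := (x.1, !x.2)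

def invw (w : List L) : List L := (w.map linv).reverse

theorem star_invw_append : ∀ w : List L, Star (invw w ++ w) [] := by
  intro w
  induction w with
  | nil => exact Relation.ReflTransGen.refl
  | cons x w ih =>
    have h1 : invw (x :: w) ++ (x :: w) = invw w ++ [(x.1, !x.2), (x.1, !!x.2)] ++ w := by
      simp [invw, linv, append_assoc, Bool.not_not]
    have hstep : Step (invw (x :: w) ++ (x :: w)) (invw w ++ w) := by
      rw [h1]
      have := step_context (p := [(x.1, !x.2), (x.1, !!x.2)]) (q := [])
        ⟨([(x.1, !x.2), (x.1, !!x.2)], []), cancel_mem x.1 (!x.2), [], [], by simp, by simp⟩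
        (invw w) w
      simpa using this
    exact Relation.ReflTransGen.head hstep ih

def NFW : Type := {w : List L // WellTempered w}

instance : Mul NFW := ⟨fun a b => ⟨nf (a.1 ++ b.1), nf_wt _⟩⟩
instance : One NFW := ⟨⟨[], step1_none_wt rfl⟩⟩
instance : Inv NFW := ⟨fun a => ⟨nf (invw a.1), nf_wt _⟩⟩

theorem nfw_mul_val (a b : NFW) : (a * b).1 = nf (a.1 ++ b.1) := rfl

instance : Group NFW := by
  apply Group.ofLeftAxioms
  · intro a b c
    apply Subtype.ext
    show nf (nf (a.1 ++ b.1) ++ c.1) = nf (a.1 ++ nf (b.1 ++ c.1))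
    rw [← nf_append_left, ← nf_append_right, append_assoc]
  · intro a
    apply Subtype.ext
    show nf ([] ++ a.1) = a.1
    rw [nil_append]
    exact nf_of_wt a.2
  · intro a
    apply Subtype.ext
    show nf (nf (invw a.1) ++ a.1) = []
    rw [← nf_append_left]
    have : nf (invw a.1 ++ a.1) = nf [] := star_nf_eq (star_invw_append a.1)
    rw [this]
    rfl

theorem wt_single (l : L) : WellTempered [l] := by
  apply wt_iff.mpr
  intro r hr hinf
  have h1 := hinf.length_le
  have h2 := (rules_lhs_len r hr).1
  simp at h1
  omega

def gen (i : Fin 5) : NFW := ⟨[(i, true)], wt_single _⟩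

def ψ : FreeGroup (Fin 5) →* NFW := FreeGroup.lift gen

theorem redStep_step {w v : List L} (h : FreeGroup.Red.Step w v) : Step w v := by
  cases h with
  | @not u v x b =>
    exact ⟨([(x, b), (x, !b)], []), cancel_mem x b, u, v, by simp, by simp⟩

theorem red_star {w v : List L} (h : FreeGroup.Red w v) : Star w v :=
  Relation.ReflTransGen.mono (r := @FreeGroup.Red.Step (Fin 5)) (p := Step) (fun _ _ => redStep_step) w v h

theorem nf_reduce (w : List L) : nf (FreeGroup.reduce w) = nf w :=
  (star_nf_eq (red_star (FreeGroup.reduce.red))).symm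

theorem lift_val : ∀ x : FreeGroup (Fin 5), (ψ x).1 = nf x.toWord := by
  intro x
  induction x using FreeGroup.induction_on with
  | C1 =>
    rw [map_one, FreeGroup.toWord_one]
    rfl
  | of i =>
    have hpure : (pure i : FreeGroup (Fin 5)) = FreeGroup.of i := rfl
    rw [FreeGroup.toWord_of]
    have h1 : ψ (FreeGroup.of i) = gen i := FreeGroup.lift_apply_of
    rw [h1]
    exact (nf_of_wt (wt_single _)).symm
  | inv_of i _ =>
    have hpure : (pure i : FreeGroup (Fin 5)) = FreeGroup.of i := rfl
    rw [map_inv]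
    have h1 : ψ (FreeGroup.of i) = gen i := FreeGroup.lift_apply_of
    rw [h1, FreeGroup.toWord_inv, FreeGroup.toWord_of]
    rfl
  | mul x y ihx ihy =>
    rw [map_mul]
    show nf ((ψ x).1 ++ (ψ y).1) = _
    rw [ihx, ihy, ← nf_append_left, ← nf_append_right]
    have : x * y = FreeGroup.mk (x.toWord ++ y.toWord) := by
      rw [← FreeGroup.mul_mk, FreeGroup.mk_toWord, FreeGroup.mk_toWord]
    rw [this, FreeGroup.toWord_mk, nf_reduce]

theorem relatorWord : surfaceRelator = FreeGroup.mk
    [(0, true), (1, true), (2, true), (3, true), (4, true),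
     (0, false), (1, false), (2, false), (3, false), (4, false)] := by
  decide

theorem ψ_relator : ψ surfaceRelator = 1 := by
  apply Subtype.ext
  rw [lift_val, relatorWord, FreeGroup.toWord_mk, nf_reduce]
  show nf _ = ([] : List L)
  decide

abbrev N : Subgroup (FreeGroup (Fin 5)) :=
  Subgroup.normalClosure ({surfaceRelator} : Set (FreeGroup (Fin 5)))

theorem N_le_ker : N ≤ ψ.ker := by
  apply Subgroup.normalClosure_le_normal
  intro x hx
  rw [Set.mem_singleton_iff] at hx
  subst hx
  exact ψ_relator

def Φ : SurfaceGroup →* NFW :=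
  QuotientGroup.lift N ψ (fun x hx => N_le_ker hx)

theorem Φ_rep (w : List L) : (Φ (represents w)).1 = nf w := by
  show (ψ (FreeGroup.mk w)).1 = nf w
  rw [lift_val, FreeGroup.toWord_mk, nf_reduce]

/-! ### Rewriting preserves the represented element -/

def turnData : List (List L × List L × Bool) :=
  [ ([(4,true),(3,true),(2,true),(1,true),(0,true)],
      ([(0,false),(1,false),(2,false),(3,false),(4,false)], true)),
    ([(1,false),(0,false),(4,true),(3,true),(2,true)],
      ([(2,false),(3,false),(4,false)], true)),
    ([(3,false),(2,false),(1,false),(0,false),(4,true)],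
      ([(4,false)], true)),
    ([(0,true),(4,false),(3,false),(2,false),(1,false)],
      ([(0,false)], true)),
    ([(2,true),(1,true),(0,true),(4,false),(3,false)],
      ([(2,false),(1,false),(0,false)], true)),
    ([(0,false),(1,false),(2,false),(3,false),(4,false)],
      ([], false)),
    ([(2,false),(3,false),(4,false),(0,true),(1,true)],
      ([(1,false),(0,false)], false)),
    ([(4,false),(0,true),(1,true),(2,true),(3,true)],
      ([(3,false),(2,false),(1,false),(0,false)], false)),
    ([(1,true),(2,true),(3,true),(4,true),(0,false)],
      ([(1,false),(2,false),(3,false),(4,false)], false)),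
    ([(3,true),(4,true),(0,false),(1,false),(2,false)],
      ([(3,false),(4,false)], false)) ]

set_option maxHeartbeats 1000000 in
theorem turnData_eq : ∀ d ∈ turnData,
    (FreeGroup.mk d.1)⁻¹ * FreeGroup.mk d.1.reverse
      = FreeGroup.mk d.2.1 * (if d.2.2 then surfaceRelator else surfaceRelator⁻¹)
        * (FreeGroup.mk d.2.1)⁻¹ := by decide

theorem turnData_cover : ∀ t ∈ badTurns, ∃ d ∈ turnData, d.1 = t := by decide

theorem turn_represents {t : List L} (ht : t ∈ badTurns) :
    represents t = represents t.reverse := by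
  obtain ⟨d, hd, rfl⟩ := turnData_cover t ht
  show QuotientGroup.mk _ = QuotientGroup.mk _
  rw [QuotientGroup.eq]
  rw [turnData_eq d hd]
  have hrel : surfaceRelator ∈ N :=
    Subgroup.subset_normalClosure (Set.mem_singleton _)
  have hcore : (if d.2.2 then surfaceRelator else surfaceRelator⁻¹) ∈ N := by
    split
    · exact hrel
    · exact inv_mem hrel
  exact (Subgroup.normalClosure_normal).conj_mem _ hcore _

theorem cancel_mk : ∀ (x : Fin 5) (b : Bool),
    FreeGroup.mk [(x, b), (x, !b)] = (1 : FreeGroup (Fin 5)) := by decide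

theorem step_represents {w w' : List L} (h : Step w w') :
    represents w = represents w' := by
  obtain ⟨r, hr, u, v, rfl, rfl⟩ := h
  have key : represents r.1 = represents r.2 := by
    rcases ruleShape r hr with ⟨x, b, rfl⟩ | ⟨ht, hq⟩
    · show QuotientGroup.mk _ = QuotientGroup.mk _
      rw [cancel_mk, ← FreeGroup.one_eq_mk]
    · rw [hq]
      exact turn_represents ht
  show QuotientGroup.mk _ = QuotientGroup.mk _
  rw [← FreeGroup.mul_mk, ← FreeGroup.mul_mk, ← FreeGroup.mul_mk, ← FreeGroup.mul_mk]
  have : QuotientGroup.mk (s := N) (FreeGroup.mk r.1) = QuotientGroup.mk (FreeGroup.mk r.2) :=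
    key
  simp only [QuotientGroup.mk_mul]
  rw [this]

theorem star_represents {w v : List L} (h : Star w v) : represents w = represents v := by
  induction h with
  | refl => rfl
  | tail _ hstep ih => exact ih.trans (step_represents hstep)

end WTaux

/-- Every element of the genus-two surface group is represented by a unique
well-tempered word. -/
theorem wellTempered_exists_unique (g : SurfaceGroup) :
    ∃! w : List (Fin 5 × Bool), WellTempered w ∧ represents w = g := by
  obtain ⟨x, rfl⟩ := QuotientGroup.mk_surjective g
  refine ⟨WTaux.nf x.toWord, ⟨WTaux.nf_wt _, ?_⟩, ?_⟩
  · have h1 : represents x.toWord = represents (WTaux.nf x.toWord) :=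
      WTaux.star_represents (WTaux.star_nf _)
    rw [← h1]
    show QuotientGroup.mk (FreeGroup.mk x.toWord) = _
    rw [FreeGroup.mk_toWord]
  · intro w ⟨hwt, hrep⟩
    have h1 := congrArg WTaux.Φ hrep
    have h2 : (WTaux.Φ (represents w)).1 = WTaux.nf w := WTaux.Φ_rep w
    have h3 : (WTaux.Φ (QuotientGroup.mk x)).1 = WTaux.nf x.toWord := by
      show (WTaux.ψ x).1 = _
      exact WTaux.lift_val x
    rw [← WTaux.nf_of_wt hwt, ← h2, h1, h3]
end

section
/- Let G be the group presented with five generators a, b, c, d, e and the single relator a b c d e a⁻¹ b⁻¹ c⁻¹ d⁻¹ e⁻¹. If w is a well-tempered word and w′ is any word representing the same element of G as w, then |w| ≤ |w′|; that is, well-tempered words are geodesic. -/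
-- ===================== proof =====================
namespace SGG

abbrev L5 := List (Fin 5 × Bool)
abbrev F5 := FreeGroup (Fin 5)

def RR (a b : Fin 5 × Bool) : Prop := ¬ (a.1 = b.1 ∧ a.2 = !b.2)

instance : DecidableRel RR := fun a b => inferInstanceAs (Decidable (¬ (a.1 = b.1 ∧ a.2 = !b.2)))

theorem reduced_infix {w v : L5} (hw : Reduced w) (h : v <:+: w) : Reduced v :=
  fun x b hb => hw x b (hb.trans h)

theorem reduced_chain' : ∀ {v : L5}, Reduced v → v.IsChain RR := by
  intro v
  induction v with
  | nil => intro _; simp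
  | cons x v ih =>
    intro h
    rw [List.isChain_cons]
    refine ⟨?_, ih (reduced_infix h ((List.suffix_cons x v).isInfix))⟩
    intro y hy
    cases v with
    | nil => simp at hy
    | cons z v' =>
      simp only [List.head?_cons, Option.mem_some_iff] at hy
      subst hy
      rintro ⟨h1, h2⟩
      refine h x.1 x.2 ⟨[], v', ?_⟩
      have hz : z = (x.1, !x.2) := by
        refine Prod.ext h1.symm ?_
        rw [h2, Bool.not_not]
      simp [hz]

theorem chain'_reduce_eq_self : ∀ {v : L5}, v.IsChain RR → FreeGroup.reduce v = v := by
  intro v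
  induction v with
  | nil => intro _; rfl
  | cons x v ih =>
    intro h
    rw [List.isChain_cons] at h
    rw [FreeGroup.reduce.cons, ih h.2]
    cases v with
    | nil => rfl
    | cons z v' =>
      have hR : RR x z := h.1 z (by simp)
      simp only []
      rw [if_neg hR]

theorem reduced_reduce_eq_self {v : L5} (h : Reduced v) : FreeGroup.reduce v = v :=
  chain'_reduce_eq_self (reduced_chain' h)

theorem flatten_replicate_succ (X : L5) (n : ℕ) :
    (List.replicate (n+1) X).flatten = X ++ (List.replicate n X).flatten := by
  rw [List.replicate_succ, List.flatten_cons]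

theorem flatten_replicate_succ' (X : L5) (n : ℕ) :
    (List.replicate (n+1) X).flatten = (List.replicate n X).flatten ++ X := by
  rw [List.replicate_succ', List.flatten_append]
  simp

theorem length_flatten_replicate (X : L5) (n : ℕ) :
    ((List.replicate n X).flatten).length = n * X.length := by
  induction n with
  | zero => simp
  | succ n ih => rw [flatten_replicate_succ, List.length_append, ih]; ring

theorem head?_flatten_replicate (X : L5) (hX : X ≠ []) (n : ℕ) (hn : 0 < n) :
    ((List.replicate n X).flatten).head? = X.head? := by
  cases n with
  | zero => omega
  | succ n =>
    rw [flatten_replicate_succ, List.head?_append]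
    cases X with
    | nil => simp at hX
    | cons a l => simp

theorem chain'_flatten_replicate (X : L5) (hX : X.IsChain RR)
    (hj : ∀ x ∈ X.getLast?, ∀ y ∈ X.head?, RR x y) (n : ℕ) :
    ((List.replicate n X).flatten).IsChain RR := by
  induction n with
  | zero => simp
  | succ n ih =>
    rw [flatten_replicate_succ]
    rw [List.isChain_append]
    refine ⟨hX, ih, ?_⟩
    intro x hx y hy
    rcases Nat.eq_zero_or_pos n with rfl | hn
    · simp at hy
    · have hXne : X ≠ [] := by rintro rfl; simp at hx
      rw [head?_flatten_replicate X hXne n hn] at hy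
      exact hj x hx y hy

theorem mk_flatten_replicate (X : L5) (n : ℕ) :
    FreeGroup.mk ((List.replicate n X).flatten) = (FreeGroup.mk X) ^ n := by
  induction n with
  | zero => simp [FreeGroup.one_eq_mk]
  | succ n ih =>
    rw [flatten_replicate_succ, ← FreeGroup.mul_mk, ih, pow_succ']

def zw (X : L5) (k : ℤ) : L5 :=
  if 0 ≤ k then (List.replicate k.toNat X).flatten
  else (List.replicate (-k).toNat (FreeGroup.invRev X)).flatten

theorem mk_zw (X : L5) (k : ℤ) : FreeGroup.mk (zw X k) = (FreeGroup.mk X) ^ k := by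
  unfold zw
  split_ifs with h
  · rw [mk_flatten_replicate]
    rw [← zpow_natCast, Int.toNat_of_nonneg h]
  · rw [mk_flatten_replicate, ← FreeGroup.inv_mk, inv_pow, ← zpow_natCast,
      Int.toNat_of_nonneg (by omega), ← zpow_neg, neg_neg]

theorem chain'_zw (X : L5) (hX : X.IsChain RR)
    (hj : ∀ x ∈ X.getLast?, ∀ y ∈ X.head?, RR x y)
    (hXi : (FreeGroup.invRev X).IsChain RR)
    (hji : ∀ x ∈ (FreeGroup.invRev X).getLast?, ∀ y ∈ (FreeGroup.invRev X).head?, RR x y)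
    (k : ℤ) : (zw X k).IsChain RR := by
  unfold zw
  split_ifs with h
  · exact chain'_flatten_replicate X hX hj _
  · exact chain'_flatten_replicate _ hXi hji _

theorem length_zw (X : L5) (k : ℤ) : (zw X k).length = k.natAbs * X.length := by
  unfold zw
  split_ifs with h
  · rw [length_flatten_replicate]; congr 1; omega
  · rw [length_flatten_replicate, FreeGroup.invRev_length]; congr 1; omega

theorem zw_eq_nil_iff (X : L5) (hX : X ≠ []) {k : ℤ} : zw X k = [] ↔ k = 0 := by
  constructor
  · intro h
    have := congrArg List.length h
    rw [length_zw] at this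
    simp at this
    rcases this with h' | h'
    · omega
    · exact absurd h' hX
  · rintro rfl; rfl

end SGG

-- Part B/C : per-generator data and the cyclic-subgroup equivalence
namespace SGG

def Pw (t : Fin 5) : L5 :=
  [(t+1, decide ((t:ℕ) < 4)), (t+2, decide ((t:ℕ) < 3)), (t+3, decide ((t:ℕ) < 2)),
   (t+4, decide ((t:ℕ) < 1))]

def Qw (t : Fin 5) : L5 := (Pw t).reverse

/-- `Xw t true` is the word conjugated by `t`; `Xw t false` the one conjugated by `t⁻¹`. -/
def Xw (t : Fin 5) (b : Bool) : L5 := if b then Pw t else Qw t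

def pp (t : Fin 5) : F5 := FreeGroup.mk (Pw t)
def qq (t : Fin 5) : F5 := FreeGroup.mk (Qw t)

theorem chain'_Xw : ∀ (t : Fin 5) (b : Bool), (Xw t b).IsChain RR := by
  intro t b; fin_cases t <;> cases b <;> simp [Xw, Pw, Qw, List.isChain_cons_cons, RR]

theorem chain'_invRev_Xw : ∀ (t : Fin 5) (b : Bool), (FreeGroup.invRev (Xw t b)).IsChain RR := by
  intro t b; fin_cases t <;> cases b <;>
    simp [Xw, Pw, Qw, FreeGroup.invRev, List.isChain_cons_cons, RR]

theorem junction_Xw : ∀ (t : Fin 5) (b : Bool),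
    ∀ x ∈ (Xw t b).getLast?, ∀ y ∈ (Xw t b).head?, RR x y := by
  intro t b; fin_cases t <;> cases b <;> simp [Xw, Pw, Qw, RR]

theorem junction_invRev_Xw : ∀ (t : Fin 5) (b : Bool),
    ∀ x ∈ (FreeGroup.invRev (Xw t b)).getLast?, ∀ y ∈ (FreeGroup.invRev (Xw t b)).head?, RR x y := by
  intro t b; fin_cases t <;> cases b <;> simp [Xw, Pw, Qw, FreeGroup.invRev, RR]

theorem Xw_ne_nil : ∀ (t : Fin 5) (b : Bool), Xw t b ≠ [] := by
  intro t b; fin_cases t <;> cases b <;> simp [Xw, Pw, Qw]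

theorem Xw_tfree : ∀ (t : Fin 5) (b : Bool), ∀ x ∈ Xw t b, x.1 ≠ t := by
  decide

theorem zw_Xw_reduce (t : Fin 5) (b : Bool) (k : ℤ) :
    FreeGroup.reduce (zw (Xw t b) k) = zw (Xw t b) k :=
  chain'_reduce_eq_self
    (chain'_zw _ (chain'_Xw t b) (junction_Xw t b) (chain'_invRev_Xw t b) (junction_invRev_Xw t b) k)

/-- uniqueness of exponents for `mk (Xw t b)` -/
theorem xw_zpow_injective (t : Fin 5) (b : Bool) :
    Function.Injective (fun k : ℤ => (FreeGroup.mk (Xw t b)) ^ k) := by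
  intro m n hmn
  by_contra hne
  simp only [] at hmn
  have h1 : (FreeGroup.mk (Xw t b)) ^ (m - n) = 1 := by
    rw [zpow_sub, hmn, mul_inv_cancel]
  rw [← mk_zw] at h1
  have h2 : FreeGroup.reduce (zw (Xw t b) (m - n)) = [] := by
    have := congrArg FreeGroup.toWord h1
    rwa [FreeGroup.toWord_mk, FreeGroup.toWord_one] at this
  rw [zw_Xw_reduce] at h2
  rw [zw_eq_nil_iff _ (Xw_ne_nil t b)] at h2
  omega

theorem mk_zpow_eq_iff (t : Fin 5) (b : Bool) {k : ℤ} {v : L5} (hv : Reduced v)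
    (h : FreeGroup.mk v = (FreeGroup.mk (Xw t b)) ^ k) : v = zw (Xw t b) k := by
  rw [← mk_zw] at h
  have := FreeGroup.reduce.sound h
  rwa [reduced_reduce_eq_self hv, zw_Xw_reduce] at this

/-- generic: an isomorphism `zpowers p ≃* zpowers q` sending `p` to `q`,
for `p`, `q` with unique exponents. -/
noncomputable def zpexp {F : Type*} [Group F] (p : F) (a : Subgroup.zpowers p) : ℤ :=
  Classical.choose (Subgroup.mem_zpowers_iff.mp a.2)

theorem zpexp_spec {F : Type*} [Group F] (p : F) (a : Subgroup.zpowers p) :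
    p ^ (zpexp p a) = (a : F) :=
  Classical.choose_spec (Subgroup.mem_zpowers_iff.mp a.2)

theorem zpexp_zpow {F : Type*} [Group F] {p : F}
    (hp : Function.Injective (fun k : ℤ => p ^ k)) (k : ℤ) (h) :
    zpexp p ⟨p ^ k, h⟩ = k := by
  apply hp
  show p ^ _ = p ^ _
  rw [zpexp_spec]

noncomputable def zpEquiv {F : Type*} [Group F] {p q : F}
    (hp : Function.Injective (fun k : ℤ => p ^ k))
    (hq : Function.Injective (fun k : ℤ => q ^ k)) :
    Subgroup.zpowers p ≃* Subgroup.zpowers q where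
  toFun a := ⟨q ^ (zpexp p a), Subgroup.zpow_mem _ (Subgroup.mem_zpowers q) _⟩
  invFun b := ⟨p ^ (zpexp q b), Subgroup.zpow_mem _ (Subgroup.mem_zpowers p) _⟩
  left_inv a := by
    ext
    show p ^ (zpexp q ⟨q ^ (zpexp p a), _⟩) = (a : F)
    rw [zpexp_zpow hq, zpexp_spec]
  right_inv b := by
    ext
    show q ^ (zpexp p ⟨p ^ (zpexp q b), _⟩) = (b : F)
    rw [zpexp_zpow hp, zpexp_spec]
  map_mul' a b := by
    ext
    show q ^ (zpexp p (a * b)) = q ^ (zpexp p a) * q ^ (zpexp p b)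
    rw [← zpow_add]
    congr 1
    apply hp
    show p ^ _ = p ^ _
    rw [zpexp_spec, zpow_add, zpexp_spec, zpexp_spec]
    rfl

theorem zpEquiv_apply {F : Type*} [Group F] {p q : F}
    (hp : Function.Injective (fun k : ℤ => p ^ k))
    (hq : Function.Injective (fun k : ℤ => q ^ k)) (k : ℤ) (h) :
    (zpEquiv hp hq ⟨p ^ k, h⟩ : F) = q ^ k := by
  show (q ^ (zpexp p ⟨p ^ k, h⟩) : F) = q ^ k
  rw [zpexp_zpow hp]

end SGG

-- Part D1 : the HNN extensions, homomorphisms, and length bounds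
namespace SGG

open HNNExtension

abbrev hA (t : Fin 5) : Subgroup F5 := Subgroup.zpowers (FreeGroup.mk (Xw t true))
abbrev hB (t : Fin 5) : Subgroup F5 := Subgroup.zpowers (FreeGroup.mk (Xw t false))

noncomputable def hphi (t : Fin 5) : hA t ≃* hB t :=
  zpEquiv (xw_zpow_injective t true) (xw_zpow_injective t false)

abbrev Ht (t : Fin 5) : Type := HNNExtension F5 (hA t) (hB t) (hphi t)

noncomputable def fgen (t : Fin 5) (i : Fin 5) : Ht t :=
  if i = t then HNNExtension.t else HNNExtension.of (FreeGroup.of i)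

noncomputable def theta (t : Fin 5) : F5 →* Ht t := FreeGroup.lift (fgen t)

theorem theta_of_ne (t i : Fin 5) (h : i ≠ t) :
    theta t (FreeGroup.of i) = HNNExtension.of (FreeGroup.of i) := by
  rw [theta, FreeGroup.lift_apply_of, fgen, if_neg h]

theorem theta_of_eq (t : Fin 5) : theta t (FreeGroup.of t) = HNNExtension.t := by
  rw [theta, FreeGroup.lift_apply_of, fgen, if_pos rfl]

theorem mk_single_true (i : Fin 5) : FreeGroup.mk [(i, true)] = FreeGroup.of i := rfl

theorem mk_single_false (i : Fin 5) : FreeGroup.mk [(i, false)] = (FreeGroup.of i)⁻¹ := by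
  rw [← mk_single_true, FreeGroup.inv_mk, FreeGroup.invRev]
  simp

theorem mk_cons (x : Fin 5 × Bool) (v : L5) :
    FreeGroup.mk (x :: v) = FreeGroup.mk [x] * FreeGroup.mk v := by
  rw [FreeGroup.mul_mk]
  rfl

theorem theta_chunk (t : Fin 5) : ∀ (v : L5), (∀ x ∈ v, x.1 ≠ t) →
    theta t (FreeGroup.mk v) = HNNExtension.of (FreeGroup.mk v) := by
  intro v
  induction v with
  | nil =>
    intro _
    have h1 : FreeGroup.mk ([] : L5) = 1 := rfl
    rw [h1, map_one, map_one]
  | cons x v ih =>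
    intro hv
    rw [mk_cons, map_mul, map_mul, ih (fun y hy => hv y (List.mem_cons_of_mem _ hy))]
    congr 1
    have hx : x.1 ≠ t := hv x List.mem_cons_self
    rcases x with ⟨i, b⟩
    cases b
    · rw [mk_single_false, map_inv, map_inv, theta_of_ne t i hx]
    · rw [mk_single_true, theta_of_ne t i hx]

/-- The image of `t * P_t * t⁻¹` is `Q_t`. -/
theorem key_conj (t : Fin 5) :
    (HNNExtension.t : Ht t) * HNNExtension.of (FreeGroup.mk (Xw t true)) *
      (HNNExtension.t : Ht t)⁻¹ = HNNExtension.of (FreeGroup.mk (Xw t false)) := by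
  have h := (HNNExtension.equiv_eq_conj (φ := hphi t)
    ⟨FreeGroup.mk (Xw t true), Subgroup.mem_zpowers _⟩).symm
  have h2 : ((hphi t ⟨FreeGroup.mk (Xw t true), Subgroup.mem_zpowers _⟩ : hB t) : F5)
      = FreeGroup.mk (Xw t false) := by
    have h3 : (⟨FreeGroup.mk (Xw t true), Subgroup.mem_zpowers _⟩ : hA t)
        = ⟨(FreeGroup.mk (Xw t true)) ^ (1 : ℤ), Subgroup.zpow_mem _ (Subgroup.mem_zpowers _) _⟩ := by
      ext; simp
    rw [h3, hphi,
      zpEquiv_apply (xw_zpow_injective t true) (xw_zpow_injective t false) (1 : ℤ), zpow_one]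
  rw [h2] at h
  exact h

open Fin.NatCast in
def cw (t : Fin 5) : F5 :=
  FreeGroup.mk ((List.range (t:ℕ)).map (fun j => ((j : Fin 5), true)))

theorem relator_factor : ∀ t : Fin 5,
    surfaceRelator = cw t * (FreeGroup.of t * FreeGroup.mk (Xw t true) * (FreeGroup.of t)⁻¹ *
      (FreeGroup.mk (Xw t false))⁻¹) * (cw t)⁻¹ := by
  decide

theorem relid (t : Fin 5) : theta t surfaceRelator = 1 := by
  have hmid : theta t (FreeGroup.of t * FreeGroup.mk (Xw t true) * (FreeGroup.of t)⁻¹ *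
      (FreeGroup.mk (Xw t false))⁻¹) = 1 := by
    simp only [map_mul, map_inv]
    rw [theta_of_eq, theta_chunk t _ (Xw_tfree t true), theta_chunk t _ (Xw_tfree t false),
      key_conj t]
    simp
  rw [relator_factor t, map_mul, map_mul, hmid, map_inv]
  simp

open HNNExtension.NormalWord in
noncomputable def dT (t : Fin 5) : TransversalPair F5 (hA t) (hB t) := Classical.arbitrary _

open HNNExtension.NormalWord in
noncomputable def lenH (t : Fin 5) (x : Ht t) : ℕ :=
  ((x • (empty : NormalWord (dT t))).toList).length

open HNNExtension.NormalWord in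
theorem len_unitsSMulWithCancel (t : Fin 5) (u : ℤˣ) (n : NormalWord (dT t))
    (hc : Cancels u n) :
    (unitsSMulWithCancel (hphi t) u n hc).toList.length + 1 = n.toList.length := by
  induction n using consRecOn with
  | ofGroup g =>
    exfalso
    rcases hc with ⟨_, hc2⟩
    simp [ofGroup] at hc2
  | cons g u' w h1 h2 ih =>
    simp only [unitsSMulWithCancel, consRecOn_cons]
    simp [cons_toList]

open HNNExtension.NormalWord in
theorem len_unitsSMul (t : Fin 5) (u : ℤˣ) (n : NormalWord (dT t)) :
    (unitsSMul (hphi t) u n).toList.length ≤ n.toList.length + 1 := by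
  rw [unitsSMul]
  split_ifs with h
  · have := len_unitsSMulWithCancel t u n h
    omega
  · simp [cons_toList]

open HNNExtension.NormalWord in
theorem lenH_one (t : Fin 5) : lenH t 1 = 0 := by
  rw [lenH, one_smul]
  rfl

open HNNExtension.NormalWord in
theorem lenH_of_mul (t : Fin 5) (g : F5) (x : Ht t) :
    lenH t (HNNExtension.of g * x) = lenH t x := by
  rw [lenH, lenH, mul_smul, of_smul_eq_smul, group_smul_toList]

open HNNExtension.NormalWord in
theorem lenH_t_mul (t : Fin 5) (u : ℤˣ) (x : Ht t) :
    lenH t ((HNNExtension.t : Ht t) ^ (u : ℤ) * x) ≤ lenH t x + 1 := by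
  rw [lenH, lenH, mul_smul, t_pow_smul_eq_unitsSMul]
  exact len_unitsSMul t u _

end SGG

namespace SGG

open HNNExtension
open HNNExtension.NormalWord

theorem wt_infix {w v : L5} (h : WellTempered w) (hv : v <:+: w) : WellTempered v :=
  ⟨reduced_infix h.1 hv, fun bt hbt hin => h.2 bt hbt (hin.trans hv)⟩

def uSign (b : Bool) : ℤˣ := if b then 1 else -1

theorem uSign_not (b : Bool) : uSign (!b) = -(uSign b) := by cases b <;> decide

theorem toSubgroup_uSign (t : Fin 5) (b : Bool) :
    toSubgroup (hA t) (hB t) (uSign b) = Subgroup.zpowers (FreeGroup.mk (Xw t b)) := by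
  cases b
  · rfl
  · rfl

def tsigns (t : Fin 5) (v : L5) : List ℤˣ :=
  (v.filter (fun x => decide (x.1 = t))).map (fun x => uSign x.2)

def countT (t : Fin 5) (v : L5) : ℕ := (v.filter (fun x => decide (x.1 = t))).length

theorem tsigns_length (t : Fin 5) (v : L5) : (tsigns t v).length = countT t v := by
  rw [tsigns, countT, List.length_map]

theorem dropWhile_head_not {α : Type*} (p : α → Bool) :
    ∀ (l : List α) {y : α} {l₂ : List α}, l.dropWhile p = y :: l₂ → p y = false := by
  intro l
  induction l with
  | nil => intro y l₂ h; simp [List.dropWhile] at h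
  | cons x l ih =>
    intro y l₂ h
    rw [List.dropWhile_cons] at h
    split_ifs at h with hp
    · exact ih h
    · cases h
      simpa using hp

theorem filter_takeWhile_nil (t : Fin 5) (v : L5) :
    (v.takeWhile (fun x => !(decide (x.1 = t)))).filter (fun x => decide (x.1 = t)) = [] := by
  rw [List.filter_eq_nil_iff]
  intro x hx
  have := List.mem_takeWhile_imp hx
  simpa using this

theorem takeWhile_tfree (t : Fin 5) (v : L5) :
    ∀ x ∈ v.takeWhile (fun x => !(decide (x.1 = t))), x.1 ≠ t := by
  intro x hx
  have := List.mem_takeWhile_imp hx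
  simpa using this

theorem tsigns_decomp (t : Fin 5) (v : L5) {y : Fin 5 × Bool} {v₂ : L5}
    (h : v.dropWhile (fun x => !(decide (x.1 = t))) = y :: v₂) :
    tsigns t v = uSign y.2 :: tsigns t v₂ := by
  have hy : decide (y.1 = t) = true := by
    have := dropWhile_head_not _ v h
    simpa using this
  conv_lhs => rw [tsigns, ← List.takeWhile_append_dropWhile
    (p := fun x => !(decide (x.1 = t))) (l := v), h]
  rw [List.filter_append, filter_takeWhile_nil, List.filter_cons, if_pos hy]
  simp [tsigns]

/-- the window fact : a pinch contains a bad turn -/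
theorem windows : ∀ (t : Fin 5) (b : Bool),
    ((∃ bt ∈ badTurns, bt <:+: ((t,b) :: Xw t b)) ∨
      (∃ bt ∈ badTurns, bt <:+: (Xw t b ++ [(t,!b)]))) ∧
    ((∃ bt ∈ badTurns, bt <:+: ((t,b) :: FreeGroup.invRev (Xw t b))) ∨
      (∃ bt ∈ badTurns, bt <:+: (FreeGroup.invRev (Xw t b) ++ [(t,!b)]))) := by
  decide

theorem window_pinch (t : Fin 5) (b : Bool) {k : ℤ} (hk : k ≠ 0) :
    ∃ bt ∈ badTurns, bt <:+: ((t, b) :: (zw (Xw t b) k ++ [(t, !b)])) := by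
  rcases lt_or_gt_of_ne hk with hneg | hpos
  · -- k < 0 : the word is built from invRev X
    have h1 : zw (Xw t b) k = (List.replicate (-k).toNat (FreeGroup.invRev (Xw t b))).flatten := by
      rw [zw, if_neg (by omega)]
    obtain ⟨m, hm⟩ : ∃ m, (-k).toNat = m + 1 := ⟨(-k).toNat - 1, by omega⟩
    rcases (windows t b).2 with ⟨bt, hbt, hin⟩ | ⟨bt, hbt, hin⟩
    · refine ⟨bt, hbt, hin.trans ?_⟩
      rw [h1, hm, flatten_replicate_succ]
      exact ⟨[], ((List.replicate m (FreeGroup.invRev (Xw t b))).flatten ++ [(t, !b)]), by simp⟩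
    · refine ⟨bt, hbt, hin.trans ?_⟩
      rw [h1, hm, flatten_replicate_succ']
      exact ⟨(t, b) :: (List.replicate m (FreeGroup.invRev (Xw t b))).flatten, [], by simp⟩
  · have h1 : zw (Xw t b) k = (List.replicate k.toNat (Xw t b)).flatten := by
      rw [zw, if_pos (by omega)]
    obtain ⟨m, hm⟩ : ∃ m, k.toNat = m + 1 := ⟨k.toNat - 1, by omega⟩
    rcases (windows t b).1 with ⟨bt, hbt, hin⟩ | ⟨bt, hbt, hin⟩
    · refine ⟨bt, hbt, hin.trans ?_⟩
      rw [h1, hm, flatten_replicate_succ]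
      exact ⟨[], ((List.replicate m (Xw t b)).flatten ++ [(t, !b)]), by simp⟩
    · refine ⟨bt, hbt, hin.trans ?_⟩
      rw [h1, hm, flatten_replicate_succ']
      exact ⟨(t, b) :: (List.replicate m (Xw t b)).flatten, [], by simp⟩

theorem theta_single (t : Fin 5) (b : Bool) :
    theta t (FreeGroup.mk [(t, b)]) = (HNNExtension.t : Ht t) ^ ((uSign b : ℤˣ) : ℤ) := by
  cases b
  · rw [mk_single_false, map_inv, theta_of_eq]
    simp [uSign]
  · rw [mk_single_true, theta_of_eq]
    simp [uSign]

/-- The key lemma : a well-tempered word parses into a Britton-reduced word. -/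
theorem exists_rw_wt (t : Fin 5) :
    ∀ (n : ℕ) (v : L5), v.length ≤ n → WellTempered v →
    ∃ rw : ReducedWord F5 (hA t) (hB t),
      rw.prod (hphi t) = theta t (FreeGroup.mk v) ∧
      rw.head = FreeGroup.mk (v.takeWhile (fun x => !(decide (x.1 = t)))) ∧
      rw.toList.map Prod.fst = tsigns t v := by
  intro n
  induction n with
  | zero =>
    intro v hv _
    have : v = [] := List.length_eq_zero_iff.mp (Nat.le_zero.mp hv)
    subst this
    refine ⟨⟨FreeGroup.mk [], [], List.isChain_nil⟩, ?_, rfl, rfl⟩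
    simp only [ReducedWord.prod, List.map_nil, List.prod_nil, mul_one]
    rw [show (FreeGroup.mk [] : F5) = 1 from rfl]
    rw [map_one, map_one]
  | succ n ih =>
    intro v hv hwt
    rcases hdw : v.dropWhile (fun x => !(decide (x.1 = t))) with _ | ⟨y, v₂⟩
    · -- no letter t in v
      refine ⟨⟨FreeGroup.mk v, [], List.isChain_nil⟩, ?_, ?_, ?_⟩
      · simp only [ReducedWord.prod, List.map_nil, List.prod_nil, mul_one]
        rw [theta_chunk t v ?tf]
        case tf =>
          intro x hx
          have hxv : x ∈ v.takeWhile (fun x => !(decide (x.1 = t))) := by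
            rw [← List.takeWhile_append_dropWhile (p := fun x => !(decide (x.1 = t))) (l := v),
              hdw] at hx
            simpa using hx
          exact takeWhile_tfree t v x hxv
      · show FreeGroup.mk v = _
        congr 1
        conv_lhs => rw [← List.takeWhile_append_dropWhile
          (p := fun x => !(decide (x.1 = t))) (l := v), hdw]
        simp
      · show ([] : List ℤˣ) = tsigns t v
        rw [tsigns]
        have : v.filter (fun x => decide (x.1 = t)) = [] := by
          conv_lhs => rw [← List.takeWhile_append_dropWhile
            (p := fun x => !(decide (x.1 = t))) (l := v), hdw]
          rw [List.filter_append, filter_takeWhile_nil]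
          simp
        rw [this]
        rfl
    · -- v = u ++ y :: v₂ with y a letter t^±1
      set p : Fin 5 × Bool → Bool := fun x => !(decide (x.1 = t)) with hp
      set u : L5 := v.takeWhile p with hu
      have hveq : v = u ++ y :: v₂ := by
        conv_lhs => rw [← List.takeWhile_append_dropWhile (p := p) (l := v), hdw]
      have hyt : y.1 = t := by
        have := dropWhile_head_not p v hdw
        simpa [hp] using this
      have hy : y = (t, y.2) := by
        rw [← hyt]
      have hlen : v₂.length ≤ n := by
        have := congrArg List.length hveq
        simp at this
        omega
      have hwt₂ : WellTempered v₂ := wt_infix hwt ⟨u ++ [y], [], by simp [hveq]⟩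
      obtain ⟨rw₂, hprod₂, hhead₂, hsigns₂⟩ := ih v₂ hlen hwt₂
      -- the chain condition
      have hchain : List.IsChain (fun a b => a.2 ∈ toSubgroup (hA t) (hB t) a.1 → a.1 = b.1)
          ((uSign y.2, rw₂.head) :: rw₂.toList) := by
        rw [List.isChain_cons]
        refine ⟨?_, rw₂.chain⟩
        rintro ⟨uz, gz⟩ hz hmem
        dsimp only at hmem
        show uSign y.2 = uz
        by_contra hne
        have hne2 : uSign y.2 = -uz := Int.units_ne_iff_eq_neg.mp hne
        -- identify the first t letter of v₂
        rcases hdw₂ : v₂.dropWhile p with _ | ⟨y₂, v₃⟩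
        · -- no t letter in v₂, so rw₂.toList is empty; contradiction with hz
          have : tsigns t v₂ = [] := by
            rw [tsigns]
            have : v₂.filter (fun x => decide (x.1 = t)) = [] := by
              conv_lhs => rw [← List.takeWhile_append_dropWhile (p := p) (l := v₂), hdw₂]
              rw [List.filter_append, filter_takeWhile_nil]
              simp
            rw [this]; rfl
          rw [← hsigns₂] at this
          rcases hl : rw₂.toList with _ | ⟨z', l'⟩
          · rw [hl] at hz; simp at hz
          · rw [hl] at this; simp at this
        · set u₂ : L5 := v₂.takeWhile p with hu₂
          have hveq₂ : v₂ = u₂ ++ y₂ :: v₃ := by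
            conv_lhs => rw [← List.takeWhile_append_dropWhile (p := p) (l := v₂), hdw₂]
          have hy₂t : y₂.1 = t := by
            have := dropWhile_head_not p v₂ hdw₂
            simpa [hp] using this
          -- uz is the sign of y₂
          have huz : uz = uSign y₂.2 := by
            have h1 := tsigns_decomp t v₂ hdw₂
            rw [← hsigns₂] at h1
            rcases hl : rw₂.toList with _ | ⟨z', l'⟩
            · rw [hl] at hz; simp at hz
            · rw [hl] at hz h1
              simp only [List.head?_cons, Option.mem_some_iff] at hz
              rw [List.map_cons] at h1
              injection h1 with h1a h1b
              rw [hz] at h1a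
              exact h1a
          -- sign of y₂ is opposite to sign of y
          have hy₂sign : y₂.2 = !y.2 := by
            have hss : uSign y₂.2 = -uSign y.2 := by
              rw [← huz, hne2, neg_neg]
            cases hc : y.2 <;> cases hc₂ : y₂.2 <;> rw [hc, hc₂] at hss <;>
              first | rfl | (exfalso; revert hss; decide)
          -- rw₂.head = mk u₂ lies in the cyclic subgroup
          rw [toSubgroup_uSign t y.2, hhead₂, Subgroup.mem_zpowers_iff] at hmem
          obtain ⟨k, hk⟩ := hmem
          have hu₂red : Reduced u₂ := by
            refine reduced_infix hwt.1 ?_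
            refine ⟨u ++ [y], y₂ :: v₃, ?_⟩
            rw [hveq, hveq₂]
            simp
          have hu₂eq : u₂ = zw (Xw t y.2) k := mk_zpow_eq_iff t y.2 hu₂red hk.symm
          rcases eq_or_ne k 0 with rfl | hk0
          · -- u₂ empty : violates Reduced
            have : u₂ = [] := by rw [hu₂eq]; rfl
            refine hwt.1 t y.2 ?_
            refine ⟨u, v₃, ?_⟩
            rw [hveq, hveq₂, this]
            have hy₂ : y₂ = (t, !y.2) := by
              rw [← hy₂t, ← hy₂sign]
            rw [← hy, ← hy₂]
            simp
          · -- pinch : gives a bad turn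
            obtain ⟨bt, hbt, hin⟩ := window_pinch t y.2 hk0
            refine hwt.2 bt hbt (hin.trans ?_)
            refine ⟨u, v₃, ?_⟩
            rw [hveq, hveq₂, hu₂eq]
            have hy₂ : y₂ = (t, !y.2) := by
              rw [← hy₂t, ← hy₂sign]
            rw [← hy, ← hy₂]
            simp
      refine ⟨⟨FreeGroup.mk u, (uSign y.2, rw₂.head) :: rw₂.toList, hchain⟩, ?_, rfl, ?_⟩
      · have hrhs : theta t (FreeGroup.mk v) = HNNExtension.of (FreeGroup.mk u) *
            ((HNNExtension.t : Ht t) ^ ((uSign y.2 : ℤˣ) : ℤ) * theta t (FreeGroup.mk v₂)) := by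
          conv_lhs => rw [hveq, ← FreeGroup.mul_mk, mk_cons, hy]
          rw [map_mul, map_mul, theta_chunk t u (takeWhile_tfree t v), theta_single t y.2]
        simp only [ReducedWord.prod, List.map_cons, List.prod_cons]
        rw [hrhs, ← hprod₂]
        simp only [ReducedWord.prod]
        simp [mul_assoc]
      · show uSign y.2 :: rw₂.toList.map Prod.fst = tsigns t v
        rw [hsigns₂, tsigns_decomp t v hdw]

end SGG

-- Part E : the length bound and the final theorem
namespace SGG

open HNNExtension
open HNNExtension.NormalWord

theorem countT_cons (t : Fin 5) (x : Fin 5 × Bool) (v : L5) :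
    countT t (x :: v) = countT t v + (if x.1 = t then 1 else 0) := by
  rw [countT, countT, List.filter_cons]
  split_ifs with h1 h2 h2
  · simp
  · simp at h1; exact absurd h1 h2
  · simp at h1; exact absurd h2 h1
  · simp

theorem lenH_theta_le (t : Fin 5) : ∀ v : L5,
    lenH t (theta t (FreeGroup.mk v)) ≤ countT t v := by
  intro v
  induction v with
  | nil =>
    rw [show (FreeGroup.mk [] : F5) = 1 from rfl, map_one, lenH_one]
    exact Nat.zero_le _
  | cons x v ih =>
    rw [mk_cons, map_mul, countT_cons]
    rcases x with ⟨i, b⟩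
    by_cases hi : i = t
    · subst hi
      have h1 : theta i (FreeGroup.mk [(i, b)]) = (HNNExtension.t : Ht i) ^ ((uSign b : ℤˣ) : ℤ) :=
        theta_single i b
      rw [h1, if_pos rfl]
      calc lenH i ((HNNExtension.t : Ht i) ^ ((uSign b : ℤˣ) : ℤ) * theta i (FreeGroup.mk v))
          ≤ lenH i (theta i (FreeGroup.mk v)) + 1 := lenH_t_mul i _ _
        _ ≤ countT i v + 1 := by omega
    · have h1 : theta t (FreeGroup.mk [(i, b)]) = HNNExtension.of (FreeGroup.mk [(i, b)]) :=
        theta_chunk t [(i, b)] (by intro x hx; simp at hx; rw [hx]; exact hi)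
      rw [h1, lenH_of_mul, if_neg hi]
      omega

theorem exists_rw_lenH (t : Fin 5) (x : Ht t) :
    ∃ rw : ReducedWord F5 (hA t) (hB t),
      rw.prod (hphi t) = x ∧ rw.toList.length = lenH t x := by
  refine ⟨(x • (empty : NormalWord (dT t))).toReducedWord, ?_, rfl⟩
  have h := prod_smul (d := dT t) (hphi t) x empty
  rw [prod_empty, mul_one] at h
  exact h

/-- Britton's lemma : `countT t` of a well-tempered word is at most that of
any word with the same image. -/
theorem countT_le_of_theta_eq (t : Fin 5) {w w' : L5} (hwt : WellTempered w)
    (heq : theta t (FreeGroup.mk w) = theta t (FreeGroup.mk w')) :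
    countT t w ≤ countT t w' := by
  obtain ⟨rw₁, hprod₁, _, hsigns₁⟩ := exists_rw_wt t w.length w le_rfl hwt
  obtain ⟨rw₂, hprod₂, hlen₂⟩ := exists_rw_lenH t (theta t (FreeGroup.mk w'))
  have hpp : rw₁.prod (hphi t) = rw₂.prod (hphi t) := by
    rw [hprod₁, hprod₂, heq]
  have hfst := (ReducedWord.map_fst_eq_and_of_prod_eq (hphi t) hpp).1
  have hlen : rw₁.toList.length = rw₂.toList.length := by
    have := congrArg List.length hfst
    simpa using this
  have h1 : rw₁.toList.length = countT t w := by
    have := congrArg List.length hsigns₁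
    simpa [tsigns_length] using this
  calc countT t w = rw₂.toList.length := by rw [← h1, hlen]
    _ = lenH t (theta t (FreeGroup.mk w')) := hlen₂
    _ ≤ countT t w' := lenH_theta_le t w'

theorem length_eq_sum_countT (v : L5) : ∑ t : Fin 5, countT t v = v.length := by
  induction v with
  | nil => simp [countT]
  | cons x v ih =>
    have h1 : ∀ t : Fin 5, countT t (x :: v) = countT t v + (if x.1 = t then 1 else 0) :=
      fun t => countT_cons t x v
    rw [Finset.sum_congr rfl (fun t _ => h1 t), Finset.sum_add_distrib, ih]
    rw [Finset.sum_ite_eq (Finset.univ : Finset (Fin 5)) x.1 (fun _ => 1)]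
    simp

end SGG

namespace SGG

open HNNExtension

noncomputable def Theta (t : Fin 5) : SurfaceGroup →* Ht t :=
  PresentedGroup.toGroup (f := fgen t) (by
    intro r hr
    rw [Set.mem_singleton_iff] at hr
    subst hr
    exact relid t)

theorem Theta_mk (t : Fin 5) (x : F5) :
    Theta t (QuotientGroup.mk x) = theta t x := by
  have hcomp : (Theta t).comp
      (QuotientGroup.mk' (Subgroup.normalClosure ({surfaceRelator} : Set F5))) = theta t := by
    apply FreeGroup.ext_hom
    intro a
    show Theta t (QuotientGroup.mk (FreeGroup.of a)) = theta t (FreeGroup.of a)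
    rw [show (QuotientGroup.mk (FreeGroup.of a) :
      PresentedGroup ({surfaceRelator} : Set F5)) = PresentedGroup.of a from rfl]
    rw [Theta, PresentedGroup.toGroup.of]
    rw [theta, FreeGroup.lift_apply_of]
  have h2 := DFunLike.congr_fun hcomp x
  exact h2

end SGG

section Final
open SGG

/-- Well-tempered words are geodesic: if `w` is well-tempered and `w'` represents
the same element of the surface group, then `|w| ≤ |w'|`. -/
theorem wellTempered_geodesic (w w' : List (Fin 5 × Bool))
    (hw : WellTempered w) (h : represents w' = represents w) :
    w.length ≤ w'.length := by
  have key : ∀ t : Fin 5, theta t (FreeGroup.mk w) = theta t (FreeGroup.mk w') := by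
    intro t
    rw [← Theta_mk t, ← Theta_mk t]
    exact congrArg (Theta t) h.symm
  calc w.length = ∑ t : Fin 5, countT t w := (length_eq_sum_countT w).symm
    _ ≤ ∑ t : Fin 5, countT t w' :=
        Finset.sum_le_sum (fun t _ => countT_le_of_theta_eq t hw (key t))
    _ = w'.length := length_eq_sum_countT w'

end Final
end
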